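/- arXiv:math/0508050 — 7 statements merged into one kernel-verified Lean document; each statement's English description precedes it below -/
import Mathlib

section
/- Let G be a group of orientation-preserving homeomorphisms of [0,1] and suppose there exists g ∈ G such that the set of fixed points of g lying in (0,1) does not accumulate at 0 and does not accumulate at 1. Then every nonempty subset M ⊆ (0,1) that is G-invariant and closed in (0,1) contains a nonempty subset K that is G-invariant, closed in (0,1), and minimal with these properties, i.e. K has no proper nonempty subset that is G-invariant and closed in (0,1). -/
/-!
Near `0` and near `1` the element `g` has no fixed points, so the iterates of `g` or `g⁻¹` carry
every point of `(0,1)` into one compact window `W ⊂ (0,1)`. Hence every nonempty closed invariant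
subset of `(0,1)` meets `W` in a nonempty compact set, a chain of such subsets has nonempty
intersection, and Zorn's lemma gives a minimal one.
-/

open Set Topology Filter

/-- Orientation-preserving homeomorphisms of `[0,1]`, i.e. increasing homeomorphisms of
`[0,1]` onto itself, are exactly the order isomorphisms of the unit interval
(an increasing bijection of `[0,1]` is automatically a homeomorphism). -/
abbrev IntervalHomeo := unitInterval ≃o unitInterval

/-- The `G`-orbit of a point `x`. -/
def orbit (G : Subgroup IntervalHomeo) (x : unitInterval) : Set unitInterval :=
  {y | ∃ g ∈ G, g x = y}

/-- A set `M` is `G`-invariant if `g(M) = M` for every `g ∈ G`. -/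
def Invariant (G : Subgroup IntervalHomeo) (M : Set unitInterval) : Prop :=
  ∀ g ∈ G, ⇑(g : IntervalHomeo) '' M = M

/-- The open interval `(0,1)` inside `[0,1]`. -/
def openI : Set unitInterval := {x | (x : ℝ) ∈ Set.Ioo (0 : ℝ) 1}

/-- `M` is contained in `S` and closed in the subspace topology of `S`. -/
def ClosedIn (S M : Set unitInterval) : Prop := M ⊆ S ∧ closure M ∩ S ⊆ M

section Dynamics

variable {α : Type*} [ConditionallyCompleteLinearOrder α] [TopologicalSpace α] [OrderTopology α]

/-- The first iterate to pass `a` lands in `(a, f a]`; it exists because otherwise the iterates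
would increase to a fixed point in `[x, a]`. -/
theorem Monotone.exists_iterate_mem_Ioc {f : α → α} (hf : Monotone f) (hc : Continuous f)
    {x a : α} (hxa : x ≤ a) (hx : x < f x) (hfix : ∀ y ∈ Icc x a, f y ≠ y) :
    ∃ n, f^[n] x ∈ Ioc a (f a) := by
  have hpass : ∃ n, a < f^[n] x := by
    by_contra! hle
    have hmono : Monotone fun n => f^[n] x := hf.monotone_iterate_of_le_map hx.le
    have hbdd : BddAbove (range fun n => f^[n] x) := ⟨a, forall_mem_range.2 hle⟩
    have hlim := isFixedPt_of_tendsto_iterate (tendsto_atTop_ciSup hmono hbdd) hc.continuousAt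
    exact hfix _ ⟨le_ciSup hbdd 0, ciSup_le hle⟩ hlim
  obtain ⟨m, hm⟩ : ∃ m, Nat.find hpass = m + 1 :=
    Nat.exists_eq_succ_of_ne_zero fun h0 => (Nat.find_spec hpass).not_ge (by simpa [h0] using hxa)
  have hbefore : f^[m] x ≤ a := not_lt.1 (Nat.find_min hpass (by omega))
  refine ⟨m + 1, ?_, ?_⟩
  · exact hm ▸ Nat.find_spec hpass
  · rw [Function.iterate_succ_apply']
    exact hf hbefore

theorem Monotone.exists_iterate_mem_Ico {f : α → α} (hf : Monotone f) (hc : Continuous f)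
    {x b : α} (hbx : b ≤ x) (hx : f x < x) (hfix : ∀ y ∈ Icc b x, f y ≠ y) :
    ∃ n, f^[n] x ∈ Ico (f b) b := by
  obtain ⟨n, hn⟩ := hf.dual.exists_iterate_mem_Ioc (x := OrderDual.toDual x)
    (a := OrderDual.toDual b) hc hbx hx fun y hy => hfix y ⟨hy.2, hy.1⟩
  exact ⟨n, hn.2, hn.1⟩

end Dynamics

section Accumulation

variable {α : Type*} [LinearOrder α] [TopologicalSpace α] [OrderTopology α]

theorem exists_gt_disjoint_Ioo_of_not_accPt {x y : α} {C : Set α} (h : ¬AccPt x (𝓟 C))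
    (hxy : x < y) : ∃ u, x < u ∧ Disjoint (Ioo x u) C := by
  rw [accPt_iff_frequently, not_frequently] at h
  obtain ⟨u, hxu, hsub⟩ :=
    (mem_nhdsGT_iff_exists_Ioo_subset' hxy).1 (h.filter_mono nhdsWithin_le_nhds)
  exact ⟨u, hxu, disjoint_left.2 fun z hz hzC => hsub hz ⟨hz.1.ne', hzC⟩⟩

theorem exists_lt_disjoint_Ioo_of_not_accPt {x y : α} {C : Set α} (h : ¬AccPt x (𝓟 C))
    (hyx : y < x) : ∃ l, l < x ∧ Disjoint (Ioo l x) C := by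
  rw [accPt_iff_frequently, not_frequently] at h
  obtain ⟨l, hlx, hsub⟩ :=
    (mem_nhdsLT_iff_exists_Ioo_subset' hyx).1 (h.filter_mono nhdsWithin_le_nhds)
  exact ⟨l, hlx, disjoint_left.2 fun z hz hzC => hsub hz ⟨hz.2.ne, hzC⟩⟩

end Accumulation

theorem OrderIso.coe_pow {β : Type*} [LE β] (h : β ≃o β) (n : ℕ) : ⇑(h ^ n) = (⇑h)^[n] :=
  hom_coe_pow _ rfl (fun _ _ => rfl) h n

section OrderIsoGroup

variable {α : Type*} [ConditionallyCompleteLinearOrder α] [TopologicalSpace α] [OrderTopology α]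
  {G : Subgroup (α ≃o α)} {g : α ≃o α}

theorem Subgroup.exists_apply_mem_Ioc (hg : g ∈ G) {x a : α} (hxa : x ≤ a)
    (hfix : ∀ y ∈ Icc x a, g y ≠ y) : ∃ γ ∈ G, γ x ∈ Ioc a (g a ⊔ g⁻¹ a) := by
  rcases lt_trichotomy x (g x) with hlt | heq | hgt
  · obtain ⟨n, hn⟩ := g.monotone.exists_iterate_mem_Ioc g.continuous hxa hlt hfix
    exact ⟨g ^ n, G.pow_mem hg n, by rw [OrderIso.coe_pow]; exact ⟨hn.1, le_sup_of_le_left hn.2⟩⟩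
  · exact absurd heq.symm (hfix x ⟨le_rfl, hxa⟩)
  · have hlt : x < g⁻¹ x := by simpa using g⁻¹.strictMono hgt
    have hfix' : ∀ y ∈ Icc x a, g⁻¹ y ≠ y := fun y hy hgy =>
      hfix y hy (by simpa using congrArg g hgy.symm)
    obtain ⟨n, hn⟩ := g⁻¹.monotone.exists_iterate_mem_Ioc g⁻¹.continuous hxa hlt hfix'
    exact ⟨g⁻¹ ^ n, G.pow_mem (G.inv_mem hg) n,
      by rw [OrderIso.coe_pow]; exact ⟨hn.1, le_sup_of_le_right hn.2⟩⟩

theorem Subgroup.exists_apply_mem_Ico (hg : g ∈ G) {x b : α} (hbx : b ≤ x)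
    (hfix : ∀ y ∈ Icc b x, g y ≠ y) : ∃ γ ∈ G, γ x ∈ Ico (g b ⊓ g⁻¹ b) b := by
  rcases lt_trichotomy (g x) x with hlt | heq | hgt
  · obtain ⟨n, hn⟩ := g.monotone.exists_iterate_mem_Ico g.continuous hbx hlt hfix
    exact ⟨g ^ n, G.pow_mem hg n, by rw [OrderIso.coe_pow]; exact ⟨inf_le_of_left_le hn.1, hn.2⟩⟩
  · exact absurd heq (hfix x ⟨hbx, le_rfl⟩)
  · have hlt : g⁻¹ x < x := by simpa using g⁻¹.strictMono hgt
    have hfix' : ∀ y ∈ Icc b x, g⁻¹ y ≠ y := fun y hy hgy =>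
      hfix y hy (by simpa using congrArg g hgy.symm)
    obtain ⟨n, hn⟩ := g⁻¹.monotone.exists_iterate_mem_Ico g⁻¹.continuous hbx hlt hfix'
    exact ⟨g⁻¹ ^ n, G.pow_mem (G.inv_mem hg) n,
      by rw [OrderIso.coe_pow]; exact ⟨inf_le_of_right_le hn.1, hn.2⟩⟩

end OrderIsoGroup

theorem openI_eq_Ioo : openI = Ioo 0 1 := rfl

theorem IntervalHomeo.mapsTo_openI (h : IntervalHomeo) : MapsTo h openI openI := by
  have h0 : h 0 = 0 := h.map_bot
  have h1 : h 1 = 1 := h.map_top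
  rw [openI_eq_Ioo]
  exact fun x hx => ⟨h0 ▸ h.strictMono hx.1, h1 ▸ h.strictMono hx.2⟩

/-- If `g` has no fixed points on `(0, a]` and `[b, 1)`, a point below `a` is carried into
`(a, g^{±1} a]` by the iterates of whichever of `g`, `g⁻¹` moves it up; symmetrically near `1`. -/
theorem exists_isCompact_subset_openI_forall_exists_apply_mem (G : Subgroup IntervalHomeo)
    (hg : ∃ g ∈ G, ¬ AccPt (0 : unitInterval) (𝓟 {x | x ∈ openI ∧ g x = x}) ∧
      ¬ AccPt (1 : unitInterval) (𝓟 {x | x ∈ openI ∧ g x = x})) :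
    ∃ W, IsCompact W ∧ W ⊆ openI ∧ ∀ x ∈ openI, ∃ γ ∈ G, (γ : IntervalHomeo) x ∈ W := by
  obtain ⟨g, hgG, h0, h1⟩ := hg
  rw [openI_eq_Ioo] at h0 h1 ⊢
  obtain ⟨u, hu0, hu⟩ := exists_gt_disjoint_Ioo_of_not_accPt h0 zero_lt_one
  obtain ⟨l, hl1, hl⟩ := exists_lt_disjoint_Ioo_of_not_accPt h1 zero_lt_one
  obtain ⟨a, ha0, hau⟩ := exists_between hu0
  obtain ⟨b, hlb, hb1⟩ := exists_between hl1
  have ha : a ∈ Ioo 0 1 := ⟨ha0, hau.trans_le unitInterval.le_one'⟩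
  have hb : b ∈ Ioo 0 1 := ⟨unitInterval.nonneg'.trans_lt hlb, hb1⟩
  have hfix : ∀ y ∈ Ioo 0 u ∪ Ioo l 1, g y ≠ y := by
    rintro y (hy | hy) hgy
    exacts [disjoint_left.1 hu hy ⟨⟨hy.1, hy.2.trans_le unitInterval.le_one'⟩, hgy⟩,
      disjoint_left.1 hl hy ⟨⟨unitInterval.nonneg'.trans_lt hy.1, hy.2⟩, hgy⟩]
  refine ⟨Icc (a ⊓ (g b ⊓ g⁻¹ b)) ((g a ⊔ g⁻¹ a) ⊔ b), isCompact_Icc, ?_, fun x hx => ?_⟩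
  · refine Icc_subset_Ioo (lt_inf_iff.2 ⟨ha.1, lt_inf_iff.2 ⟨?_, ?_⟩⟩)
      (sup_lt_iff.2 ⟨sup_lt_iff.2 ⟨?_, ?_⟩, hb.2⟩)
    exacts [(g.mapsTo_openI hb).1, (g⁻¹.mapsTo_openI hb).1, (g.mapsTo_openI ha).2,
      (g⁻¹.mapsTo_openI ha).2]
  rcases le_or_gt x a with hxa | hax
  · obtain ⟨γ, hγG, hγ⟩ := G.exists_apply_mem_Ioc hgG hxa fun y hy =>
      hfix y (.inl (Icc_subset_Ioo hx.1 hau hy))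
    exact ⟨γ, hγG, inf_le_left.trans hγ.1.le, hγ.2.trans le_sup_left⟩
  rcases le_or_gt b x with hbx | hxb
  · obtain ⟨γ, hγG, hγ⟩ := G.exists_apply_mem_Ico hgG hbx fun y hy =>
      hfix y (.inr (Icc_subset_Ioo hlb hx.2 hy))
    exact ⟨γ, hγG, inf_le_right.trans hγ.1, hγ.2.le.trans le_sup_right⟩
  · exact ⟨1, G.one_mem, inf_le_left.trans hax.le, hxb.le.trans le_sup_right⟩

section InvariantClosed

variable {G : Subgroup IntervalHomeo} {S W K : Set unitInterval} {c : Set (Set unitInterval)}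

theorem invariant_iff_mapsTo : Invariant G K ↔ ∀ γ ∈ G, MapsTo (γ : IntervalHomeo) K K :=
  ⟨fun h γ hγ x hx => h γ hγ ▸ mem_image_of_mem _ hx, fun h γ hγ =>
    (h γ hγ).image_subset.antisymm fun x hx => ⟨γ⁻¹ x, h _ (G.inv_mem hγ) hx, by simp⟩⟩

theorem Invariant.sInter (h : ∀ K ∈ c, Invariant G K) : Invariant G (⋂₀ c) :=
  invariant_iff_mapsTo.2 fun γ hγ _ hx =>
    mem_sInter.2 fun K hK => invariant_iff_mapsTo.1 (h K hK) γ hγ (hx K hK)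

theorem Invariant.inter_nonempty (hK : Invariant G K) (hKS : K ⊆ S) (hne : K.Nonempty)
    (hW : ∀ x ∈ S, ∃ γ ∈ G, (γ : IntervalHomeo) x ∈ W) : (K ∩ W).Nonempty := by
  obtain ⟨x, hx⟩ := hne
  obtain ⟨γ, hγG, hγW⟩ := hW x (hKS hx)
  exact ⟨γ x, invariant_iff_mapsTo.1 hK γ hγG hx, hγW⟩

theorem ClosedIn.sInter (hc : c.Nonempty) (h : ∀ K ∈ c, ClosedIn S K) : ClosedIn S (⋂₀ c) := by
  obtain ⟨K₀, hK₀⟩ := hc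
  exact ⟨(sInter_subset_of_mem hK₀).trans (h K₀ hK₀).1, fun x hx =>
    mem_sInter.2 fun K hK => (h K hK).2 ⟨closure_mono (sInter_subset_of_mem hK) hx.1, hx.2⟩⟩

theorem ClosedIn.isClosed_inter (hK : ClosedIn S K) (hW : IsClosed W) (hWS : W ⊆ S) :
    IsClosed (K ∩ W) := by
  refine isClosed_of_closure_subset fun x hx => ?_
  have hxW : x ∈ W := hW.closure_subset (closure_mono inter_subset_right hx)
  exact ⟨hK.2 ⟨closure_mono inter_subset_left hx, hWS hxW⟩, hxW⟩

theorem IsChain.sInter_nonempty_of_isCompact (hchain : IsChain (· ⊆ ·) c) (hc : c.Nonempty)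
    (hW : IsCompact W) (hWS : W ⊆ S) (h : ∀ K ∈ c, ClosedIn S K ∧ (K ∩ W).Nonempty) :
    (⋂₀ c).Nonempty := by
  have : Nonempty ((· ∩ W) '' c) := (hc.image _).to_subtype
  have hclosed : ∀ K ∈ c, IsClosed (K ∩ W) := fun K hK => (h K hK).1.isClosed_inter hW.isClosed hWS
  obtain ⟨x, hx⟩ := IsCompact.nonempty_sInter_of_directed_nonempty_isCompact_isClosed
    (directedOn_image.2 ((show IsChain (· ⊇ ·) c from hchain.symm).directedOn.mono
      fun _ _ h => inter_subset_inter_left W h))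
    (forall_mem_image.2 fun K hK => (h K hK).2)
    (forall_mem_image.2 fun K hK => hW.of_isClosed_subset (hclosed K hK) inter_subset_right)
    (forall_mem_image.2 hclosed)
  exact ⟨x, mem_sInter.2 fun K hK => (hx _ (mem_image_of_mem _ hK)).1⟩

end InvariantClosed

/-- If some `g ∈ G` has fixed-point set in `(0,1)` accumulating at
neither `0` nor `1`, then every nonempty `G`-invariant subset of `(0,1)` closed in `(0,1)`
contains a nonempty `G`-invariant subset closed in `(0,1)` that is minimal with these
properties. -/
theorem stmt0 (G : Subgroup IntervalHomeo)
    (hg : ∃ g ∈ G, ¬ AccPt (0 : unitInterval) (𝓟 {x | x ∈ openI ∧ g x = x}) ∧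
      ¬ AccPt (1 : unitInterval) (𝓟 {x | x ∈ openI ∧ g x = x})) :
    ∀ M : Set unitInterval, M.Nonempty → Invariant G M → ClosedIn openI M →
      ∃ K ⊆ M, K.Nonempty ∧ Invariant G K ∧ ClosedIn openI K ∧
        ∀ K' ⊆ K, K'.Nonempty → Invariant G K' → ClosedIn openI K' → K' = K := by
  obtain ⟨W, hWc, hWI, hW⟩ := exists_isCompact_subset_openI_forall_exists_apply_mem G hg
  intro M hMne hMinv hMcl
  set 𝒦 : Set (Set unitInterval) :=
    {K | K ⊆ M ∧ K.Nonempty ∧ Invariant G K ∧ ClosedIn openI K}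
  have hchain : ∀ c ⊆ 𝒦, IsChain (· ⊆ ·) c → c.Nonempty → ∃ lb ∈ 𝒦, ∀ K ∈ c, lb ⊆ K := by
    intro c hc𝒦 hchain hcne
    have hne : (⋂₀ c).Nonempty := hchain.sInter_nonempty_of_isCompact hcne hWc hWI fun K hK =>
      let ⟨_, hKne, hKinv, hKcl⟩ := hc𝒦 hK
      ⟨hKcl, hKinv.inter_nonempty hKcl.1 hKne hW⟩
    obtain ⟨K₀, hK₀⟩ := hcne
    refine ⟨⋂₀ c, ⟨(sInter_subset_of_mem hK₀).trans (hc𝒦 hK₀).1, hne, ?_, ?_⟩,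
      fun _ => sInter_subset_of_mem⟩
    exacts [.sInter fun K hK => (hc𝒦 hK).2.2.1, .sInter ⟨K₀, hK₀⟩ fun K hK => (hc𝒦 hK).2.2.2]
  obtain ⟨K, -, hK⟩ := zorn_superset_nonempty 𝒦 hchain M ⟨subset_rfl, hMne, hMinv, hMcl⟩
  obtain ⟨hKM, hKne, hKinv, hKcl⟩ := hK.prop
  exact ⟨K, hKM, hKne, hKinv, hKcl, fun K' hK'K hne hinv hcl =>
    hK.eq_of_subset ⟨hK'K.trans hKM, hne, hinv, hcl⟩ hK'K⟩
end

section
/- Let G be a finitely generated group of orientation-preserving homeomorphisms of [0,1] such that no point of (0,1) is fixed by every element of G. Then every nonempty subset M ⊆ (0,1) that is G-invariant and closed in (0,1) contains a nonempty subset K that is G-invariant, closed in (0,1), and minimal with these properties, i.e. K has no proper nonempty subset that is G-invariant and closed in (0,1). -/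
open Set Topology Filter

instance : Fact ((0:ℝ) ≤ 1) := ⟨zero_le_one⟩

/-- An order isomorphism of `[0,1]` maps `(0,1)` into itself. -/
lemma IntervalHomeo.maps_openI (s : IntervalHomeo) {x : unitInterval} (hx : x ∈ openI) :
    s x ∈ openI := by
  have h0 : (⊥ : unitInterval) < x := by
    change ((⊥ : unitInterval) : ℝ) < (x : ℝ); exact hx.1
  have h1 : x < (⊤ : unitInterval) := by
    change (x : ℝ) < ((⊤ : unitInterval) : ℝ); exact hx.2
  have hb : (⊥ : unitInterval) < s x := by
    have := s.strictMono h0; rwa [BotHomClass.map_bot s] at this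
  have ht : s x < (⊤ : unitInterval) := by
    have := s.strictMono h1; rwa [TopHomClass.map_top s] at this
  exact ⟨hb, ht⟩

/-- If `G` is finitely generated and no point of `(0,1)` is fixed by every
element of `G`, then every nonempty `G`-invariant subset of `(0,1)` closed in `(0,1)` contains
a nonempty `G`-invariant subset closed in `(0,1)` that is minimal with these properties. -/
theorem stmt1 (G : Subgroup IntervalHomeo) (hfg : G.FG)
    (hnofix : ∀ x ∈ openI, ∃ g ∈ G, g x ≠ x) :
    ∀ M : Set unitInterval, M.Nonempty → Invariant G M → ClosedIn openI M →
      ∃ K ⊆ M, K.Nonempty ∧ Invariant G K ∧ ClosedIn openI K ∧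
        ∀ K' ⊆ K, K'.Nonempty → Invariant G K' → ClosedIn openI K' → K' = K := by
  classical
  haveI : DecidableEq IntervalHomeo := Classical.decEq _
  obtain ⟨S, hS⟩ := hfg
  -- symmetrized finite generating set
  set T : Finset IntervalHomeo := S ∪ S.image (·⁻¹) with hT
  have hSG : ∀ s ∈ S, s ∈ G := fun s hs => hS ▸ Subgroup.subset_closure hs
  have hTG : ∀ s ∈ T, s ∈ G := by
    intro s hs
    rcases Finset.mem_union.mp hs with h | h
    · exact hSG s h
    · obtain ⟨t, ht, rfl⟩ := Finset.mem_image.mp h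
      exact inv_mem (hSG t ht)
  -- every point of (0,1) is moved strictly up by some element of T
  have hmove : ∀ x ∈ openI, ∃ s ∈ T, x < s x := by
    intro x hx
    obtain ⟨g, hg, hgne⟩ := hnofix x hx
    have hgen : ∃ s ∈ S, s x ≠ x := by
      by_contra h
      push_neg at h
      have : ∀ k ∈ G, k x = x := by
        intro k hk
        rw [← hS] at hk
        induction hk using Subgroup.closure_induction with
        | mem s hs => exact h s hs
        | one => rfl
        | mul a b _ _ ha hb => show a (b x) = x; rw [hb, ha]
        | inv a _ ha =>
          show a.symm x = x
          conv_lhs => rw [← ha]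
          exact a.symm_apply_apply x
      exact hgne (this g hg)
    obtain ⟨s, hsS, hsne⟩ := hgen
    rcases lt_or_gt_of_ne hsne.symm with hlt | hgt
    · exact ⟨s, Finset.mem_union_left _ hsS, hlt⟩
    · refine ⟨s⁻¹, Finset.mem_union_right _ (Finset.mem_image_of_mem _ hsS), ?_⟩
      show x < s.symm x
      have := s.symm.strictMono hgt
      rwa [s.symm_apply_apply] at this
  -- a base point and the compact window [p, q]
  set p : unitInterval := ⟨1/2, by norm_num⟩ with hp_def
  have hp : p ∈ openI := by constructor <;> norm_num [hp_def]
  have hTne : T.Nonempty := by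
    obtain ⟨s, hsT, -⟩ := hmove p hp
    exact ⟨s, hsT⟩
  set q : unitInterval := T.sup' hTne (fun s => s p) with hq_def
  have hq1 : (q : ℝ) < 1 := by
    have : q < ⊤ := by
      rw [hq_def]
      rw [Finset.sup'_lt_iff]
      intro s hs
      have := (s.maps_openI hp).2
      change (s p : ℝ) < ((⊤ : unitInterval) : ℝ) at this ⊢
      exact this
    exact this
  have hIccI : Icc p q ⊆ openI := by
    rintro x ⟨hpx, hxq⟩
    refine ⟨lt_of_lt_of_le hp.1 hpx, lt_of_le_of_lt hxq hq1⟩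
  -- the key claim: every nonempty invariant closed-in-(0,1) set meets [p,q]
  have hkey : ∀ K : Set unitInterval, K.Nonempty → Invariant G K → ClosedIn openI K →
      (K ∩ Icc p q).Nonempty := by
    rintro K ⟨x₀, hx₀⟩ hKinv ⟨hKsub, hKcl⟩
    -- the infimum of K is fixed by all of G
    have hfix : ∀ g ∈ G, g (sInf K) = sInf K := by
      intro g hg
      rw [OrderIso.map_sInf, ← sInf_image, hKinv g hg]
    -- hence K has points strictly below p
    have hex : ∃ x ∈ K, x < p := by
      by_contra h
      push_neg at h
      have hple : p ≤ sInf K := le_sInf h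
      have hmem : sInf K ∈ openI := by
        refine ⟨lt_of_lt_of_le hp.1 hple, ?_⟩
        exact lt_of_le_of_lt (Subtype.coe_le_coe.mpr (sInf_le hx₀)) (hKsub hx₀).2
      obtain ⟨g, hg, hgne⟩ := hnofix _ hmem
      exact hgne (hfix g hg)
    obtain ⟨x, hxK, hxp⟩ := hex
    set y : unitInterval := sSup (K ∩ Iic p) with hy_def
    have hAne : (K ∩ Iic p).Nonempty := ⟨x, hxK, le_of_lt hxp⟩
    have hyp : y ≤ p := sSup_le fun a ha => ha.2
    have hycl : y ∈ closure K :=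
      closure_mono inter_subset_left (sSup_mem_closure hAne)
    have hy0 : (0 : ℝ) < (y : ℝ) :=
      lt_of_lt_of_le (hKsub hxK).1 (Subtype.coe_le_coe.mpr (le_sSup ⟨hxK, le_of_lt hxp⟩))
    have hyI : y ∈ openI := ⟨hy0, lt_of_le_of_lt (Subtype.coe_le_coe.mpr hyp) hp.2⟩
    have hyK : y ∈ K := hKcl ⟨hycl, hyI⟩
    obtain ⟨s, hsT, hys⟩ := hmove y hyI
    have hsyK : s y ∈ K := by
      rw [← hKinv s (hTG s hsT)]
      exact mem_image_of_mem _ hyK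
    have hpy : p < s y := by
      by_contra h
      push_neg at h
      exact absurd (le_sSup (show s y ∈ K ∩ Iic p from ⟨hsyK, h⟩)) (not_le.mpr hys)
    have hsq : s y ≤ q := le_trans (s.monotone hyp) (Finset.le_sup' (fun s => s p) hsT)
    exact ⟨s y, hsyK, le_of_lt hpy, hsq⟩
  -- Zorn's lemma
  intro M hMne hMinv hMcl
  set 𝒮 : Set (Set unitInterval) :=
    {K | K.Nonempty ∧ Invariant G K ∧ ClosedIn openI K} with h𝒮
  have hMS : M ∈ 𝒮 := ⟨hMne, hMinv, hMcl⟩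
  have hchain : ∀ c ⊆ 𝒮, IsChain (· ⊆ ·) c → c.Nonempty →
      ∃ lb ∈ 𝒮, ∀ s ∈ c, lb ⊆ s := by
    intro c hc hch hcne
    haveI : Nonempty c := hcne.to_subtype
    -- the compact pieces
    set F : c → Set unitInterval := fun K => (K : Set unitInterval) ∩ Icc p q with hF
    have hFcl : ∀ K : c, IsClosed (F K) := by
      intro K
      apply isClosed_of_closure_subset
      intro z hz
      have hz1 : z ∈ closure (K : Set unitInterval) :=
        closure_mono inter_subset_left hz
      have hz2 : z ∈ Icc p q := by
        have : z ∈ closure (Icc p q) := closure_mono inter_subset_right hz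
        rwa [closure_Icc] at this
      exact ⟨(hc K.2).2.2.2 ⟨hz1, hIccI hz2⟩, hz2⟩
    have hFne : ∀ K : c, (F K).Nonempty := by
      intro K
      obtain ⟨hKne, hKinv, hKcl⟩ := hc K.2
      exact hkey K hKne hKinv hKcl
    have hFdir : Directed (· ⊇ ·) F := by
      intro K₁ K₂
      rcases hch.total K₁.2 K₂.2 with h | h
      · exact ⟨K₁, le_refl _, inter_subset_inter_left _ h⟩
      · exact ⟨K₂, inter_subset_inter_left _ h, le_refl _⟩
    have hint : (⋂ K : c, F K).Nonempty :=
      IsCompact.nonempty_iInter_of_directed_nonempty_isCompact_isClosed F hFdir hFne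
        (fun K => (hFcl K).isCompact) hFcl
    obtain ⟨z, hz⟩ := hint
    have hzmem : z ∈ ⋂₀ c := by
      intro K hK
      exact (mem_iInter.mp hz ⟨K, hK⟩).1
    refine ⟨⋂₀ c, ⟨⟨z, hzmem⟩, ?_, ?_, ?_⟩, fun s hs => sInter_subset_of_mem hs⟩
    · -- invariance
      intro g hg
      apply subset_antisymm
      · intro w hw
        obtain ⟨v, hv, rfl⟩ := hw
        intro K hK
        rw [← (hc hK).2.1 g hg]
        exact mem_image_of_mem _ (hv K hK)
      · intro w hw
        refine ⟨g⁻¹ w, ?_, g.apply_symm_apply w⟩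
        intro K hK
        rw [← (hc hK).2.1 g⁻¹ (inv_mem hg)]
        exact mem_image_of_mem _ (hw K hK)
    · -- subset of openI
      obtain ⟨K₀, hK₀⟩ := hcne
      exact fun w hw => (hc hK₀).2.2.1 (hw K₀ hK₀)
    · -- closedness
      intro w hw K hK
      exact (hc hK).2.2.2 ⟨closure_mono (sInter_subset_of_mem hK) hw.1, hw.2⟩
  obtain ⟨m, hmM, hmin⟩ := zorn_superset_nonempty 𝒮 hchain M hMS
  obtain ⟨hmne, hminv, hmcl⟩ := hmin.1
  refine ⟨m, hmM, hmne, hminv, hmcl, ?_⟩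
  intro K' hK'm hK'ne hK'inv hK'cl
  exact subset_antisymm hK'm (hmin.2 ⟨hK'ne, hK'inv, hK'cl⟩ hK'm)
end

section
/- Let G be a group of orientation-preserving homeomorphisms of [0,1], each of which is a real-analytic function on [0,1]. Then every nonempty subset M ⊆ (0,1) that is G-invariant and closed in (0,1) contains a nonempty subset K that is G-invariant, closed in (0,1), and minimal with these properties, i.e. K has no proper nonempty subset that is G-invariant and closed in (0,1). -/
open Set Topology Filter

namespace Stmt2Aux

lemma cont (g : IntervalHomeo) : Continuous g := OrderIso.continuous g

lemma image_closure (g : IntervalHomeo) (s : Set unitInterval) :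
    ⇑g '' closure s = closure (⇑g '' s) := by
  have h : ⇑g = ⇑(Homeomorph.mk g.toEquiv (cont g) (cont g.symm)) := rfl
  rw [h, Homeomorph.image_closure]

lemma apply_mem {G : Subgroup IntervalHomeo} {D : Set unitInterval} (hD : Invariant G D)
    {g : IntervalHomeo} (hg : g ∈ G) {x : unitInterval} (hx : x ∈ D) : g x ∈ D := by
  rw [← hD g hg]; exact ⟨x, hx, rfl⟩

lemma invariant_of_forall {G : Subgroup IntervalHomeo} {K : Set unitInterval}
    (h : ∀ g ∈ G, ∀ x ∈ K, (g : IntervalHomeo) x ∈ K) : Invariant G K := by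
  intro g hg
  apply subset_antisymm
  · rintro _ ⟨x, hx, rfl⟩; exact h g hg x hx
  · intro y hy
    exact ⟨g⁻¹ y, h g⁻¹ (inv_mem hg) y hy, g.apply_symm_apply y⟩

lemma mem_openI {x : unitInterval} : x ∈ openI ↔ 0 < x ∧ x < 1 := by
  simp only [openI, mem_setOf_eq, mem_Ioo]
  rw [← Subtype.coe_lt_coe, ← Subtype.coe_lt_coe]
  norm_num

lemma apply_mem_openI (g : IntervalHomeo) {x : unitInterval} (hx : x ∈ openI) : g x ∈ openI := by
  rw [mem_openI] at hx ⊢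
  constructor
  · calc (0:unitInterval) = g 0 := (map_bot g).symm
      _ < g x := g.strictMono hx.1
  · calc g x < g 1 := g.strictMono hx.2
      _ = 1 := map_top g

lemma invariant_closure {G : Subgroup IntervalHomeo} {M : Set unitInterval}
    (hM : Invariant G M) : Invariant G (closure M) := by
  intro g hg; rw [image_closure, hM g hg]

lemma invariant_sInter {G : Subgroup IntervalHomeo} {c : Set (Set unitInterval)}
    (hc : ∀ D ∈ c, Invariant G D) : Invariant G (⋂₀ c) := by
  apply invariant_of_forall
  intro g hg x hx
  rw [mem_sInter] at hx ⊢
  exact fun D hD => apply_mem (hc D hD) hg (hx D hD)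

lemma invariant_inter_openI {G : Subgroup IntervalHomeo} {D : Set unitInterval}
    (hD : Invariant G D) : Invariant G (D ∩ openI) :=
  invariant_of_forall fun g hg x hx => ⟨apply_mem hD hg hx.1, apply_mem_openI _ hx.2⟩

lemma pow_apply_succ (g : IntervalHomeo) (n : ℕ) (x : unitInterval) :
    (g^(n+1)) x = g ((g^n) x) := by
  rw [pow_succ']; rfl


lemma tendsto_iterate_top (g : IntervalHomeo) {a b x : unitInterval} (hb : g b = b)
    (hx1 : a < x) (hx2 : x < b) (hmono : ∀ y, a < y → y < b → y < g y) :
    Tendsto (fun n : ℕ => (g^n) x) atTop (𝓝 b) := by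
  set u : ℕ → unitInterval := fun n => (g^n) x with hu
  have hrange : ∀ n, a < u n ∧ u n < b := by
    intro n; induction n with
    | zero => exact ⟨by simpa [u] using hx1, by simpa [u] using hx2⟩
    | succ n ih =>
      have h1 : u n < g (u n) := hmono _ ih.1 ih.2
      have h2 : g (u n) < b := by rw [← hb]; exact g.strictMono ih.2
      have h3 : u (n+1) = g (u n) := pow_apply_succ g n x
      exact ⟨lt_trans ih.1 (h3 ▸ h1), h3 ▸ h2⟩
  have hmono' : Monotone u := by
    apply monotone_nat_of_le_succ
    intro n
    rw [show u (n+1) = g (u n) from pow_apply_succ g n x]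
    exact (hmono _ (hrange n).1 (hrange n).2).le
  have hT : Tendsto u atTop (𝓝 (⨆ n, u n)) := tendsto_atTop_ciSup hmono' (OrderTop.bddAbove _)
  set L := ⨆ n, u n with hL
  have hLb : L ≤ b := ciSup_le fun n => (hrange n).2.le
  have haL : a < L := lt_of_lt_of_le (hrange 0).1 (le_ciSup (OrderTop.bddAbove _) 0)
  have hgL : g L = L := by
    have h1 : Tendsto (fun n => g (u n)) atTop (𝓝 (g L)) := ((cont g).tendsto L).comp hT
    have h2 : Tendsto (fun n => u (n+1)) atTop (𝓝 L) := hT.comp (tendsto_add_atTop_nat 1)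
    have h3 : (fun n => g (u n)) = fun n => u (n+1) := funext fun n => (pow_apply_succ g n x).symm
    rw [h3] at h1
    exact tendsto_nhds_unique h1 h2
  have hLb' : L = b := by
    rcases lt_or_eq_of_le hLb with h | h
    · exact absurd hgL (hmono L haL h).ne'
    · exact h
  rwa [hLb'] at hT

lemma tendsto_iterate_bot (g : IntervalHomeo) {a b x : unitInterval} (ha : g a = a)
    (hx1 : a < x) (hx2 : x < b) (hmono : ∀ y, a < y → y < b → g y < y) :
    Tendsto (fun n : ℕ => (g^n) x) atTop (𝓝 a) := by
  set u : ℕ → unitInterval := fun n => (g^n) x with hu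
  have hrange : ∀ n, a < u n ∧ u n < b := by
    intro n; induction n with
    | zero => exact ⟨by simpa [u] using hx1, by simpa [u] using hx2⟩
    | succ n ih =>
      have h1 : g (u n) < u n := hmono _ ih.1 ih.2
      have h2 : a < g (u n) := by rw [← ha]; exact g.strictMono ih.1
      have h3 : u (n+1) = g (u n) := pow_apply_succ g n x
      exact ⟨h3 ▸ h2, lt_trans (h3 ▸ h1) ih.2⟩
  have hmono' : Antitone u := by
    apply antitone_nat_of_succ_le
    intro n
    rw [show u (n+1) = g (u n) from pow_apply_succ g n x]
    exact (hmono _ (hrange n).1 (hrange n).2).le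
  have hT : Tendsto u atTop (𝓝 (⨅ n, u n)) := tendsto_atTop_ciInf hmono' (OrderBot.bddBelow _)
  set L := ⨅ n, u n with hL
  have hLa : a ≤ L := le_ciInf fun n => (hrange n).1.le
  have hLb : L < b := lt_of_le_of_lt (ciInf_le (OrderBot.bddBelow _) 0) (hrange 0).2
  have hgL : g L = L := by
    have h1 : Tendsto (fun n => g (u n)) atTop (𝓝 (g L)) := ((cont g).tendsto L).comp hT
    have h2 : Tendsto (fun n => u (n+1)) atTop (𝓝 L) := hT.comp (tendsto_add_atTop_nat 1)
    have h3 : (fun n => g (u n)) = fun n => u (n+1) := funext fun n => (pow_apply_succ g n x).symm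
    rw [h3] at h1
    exact tendsto_nhds_unique h1 h2
  have hLa' : L = a := by
    rcases lt_or_eq_of_le hLa with h | h
    · exact absurd hgL (hmono L h hLb).ne
    · exact h.symm
  rwa [hLa'] at hT

lemma sign_dichotomy (g : IntervalHomeo) {a b : unitInterval}
    (hfix : ∀ y, a < y → y < b → g y ≠ y) :
    (∀ y, a < y → y < b → y < g y) ∨ (∀ y, a < y → y < b → g y < y) := by
  by_contra hcon
  push_neg at hcon
  obtain ⟨⟨y₁, hy₁a, hy₁b, h₁⟩, ⟨y₂, hy₂a, hy₂b, h₂⟩⟩ := hcon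
  have h₁' : g y₁ < y₁ := lt_of_le_of_ne h₁ (hfix _ hy₁a hy₁b)
  have h₂' : y₂ < g y₂ := lt_of_le_of_ne h₂ fun h => hfix _ hy₂a hy₂b h.symm
  set f : unitInterval → ℝ := fun y => (g y : ℝ) - y with hf
  have hfc : Continuous f := (continuous_subtype_val.comp (cont g)).sub continuous_subtype_val
  have h0 : (0:ℝ) ∈ uIcc (f y₁) (f y₂) := by
    rw [Set.mem_uIcc]
    left
    constructor
    · simp only [hf, sub_nonpos]; exact_mod_cast h₁'.le
    · simp only [hf, sub_nonneg]; exact_mod_cast h₂'.le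
  obtain ⟨z, hz, hz0⟩ := intermediate_value_uIcc (a := y₁) (b := y₂) hfc.continuousOn h0
  have hzfix : g z = z := Subtype.ext (by simpa [hf, sub_eq_zero] using hz0)
  have hza : a < z := by
    rcases Set.mem_uIcc.mp hz with ⟨h, _⟩ | ⟨h, _⟩
    · exact lt_of_lt_of_le hy₁a h
    · exact lt_of_lt_of_le hy₂a h
  have hzb : z < b := by
    rcases Set.mem_uIcc.mp hz with ⟨_, h⟩ | ⟨_, h⟩
    · exact lt_of_le_of_lt h hy₂b
    · exact lt_of_le_of_lt h hy₁b
  exact hfix z hza hzb hzfix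

lemma limit_mem {D : Set unitInterval} (hDc : IsClosed D) {u : ℕ → unitInterval}
    (hu : ∀ n, u n ∈ D) {b : unitInterval} (ht : Tendsto u atTop (𝓝 b)) : b ∈ D :=
  hDc.mem_of_tendsto ht (Eventually.of_forall hu)

lemma eqOn_of_acc {F : ℝ → ℝ} (hF : AnalyticOn ℝ F (Icc 0 1)) {c : ℝ}
    (hc : c ∈ Ioo (0:ℝ) 1) (hacc : ∃ᶠ z in 𝓝[≠] c, F z = z) :
    EqOn F id (Ioo (0:ℝ) 1) := by
  have h2 : AnalyticOnNhd ℝ F (Ioo (0:ℝ) 1) :=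
    (isOpen_Ioo.analyticOn_iff_analyticOnNhd).mp (hF.mono Ioo_subset_Icc_self)
  have hH : AnalyticOnNhd ℝ (fun z => F z - z) (Ioo (0:ℝ) 1) := h2.sub (analyticOnNhd_id)
  have hfreq : ∃ᶠ z in 𝓝[≠] c, F z - z = 0 := hacc.mono (fun z hz => by rw [hz, sub_self])
  have := hH.eqOn_zero_of_preconnected_of_frequently_eq_zero isPreconnected_Ioo hc hfreq
  intro z hz
  have := this hz
  simpa [sub_eq_zero] using this

lemma eqOn_of_freq {F : ℝ → ℝ} (hF : AnalyticOn ℝ F (Icc 0 1)) {c : ℝ}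
    (hc : c ∈ Icc (0:ℝ) 1)
    (hfreq : ∃ᶠ z in 𝓝[≠] c, z ∈ Ioo (0:ℝ) 1 ∧ F z = z) :
    EqOn F id (Ioo (0:ℝ) 1) := by
  have hw : AnalyticWithinAt ℝ F (Icc 0 1) c := hF c hc
  obtain ⟨F₂, -, hEq, hA⟩ := hw.exists_analyticAt
  have hIcc : insert c (Icc (0:ℝ) 1) = Icc 0 1 := insert_eq_self.mpr hc
  rw [hIcc] at hEq
  have hH : AnalyticAt ℝ (fun z => F₂ z - z) c := hA.sub analyticAt_id
  have hfreq2 : ∃ᶠ z in 𝓝[≠] c, F₂ z - z = 0 := by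
    refine hfreq.mono (fun z hz => ?_)
    rw [← hEq (Ioo_subset_Icc_self hz.1), hz.2, sub_self]
  have hev : ∀ᶠ z in 𝓝 c, F₂ z - z = 0 := hH.frequently_zero_iff_eventually_zero.mp hfreq2
  obtain ⟨ε, hε, hball⟩ := Metric.eventually_nhds_iff.mp hev
  -- choose interior point c'
  set lo : ℝ := max 0 (c - ε) with hlo
  set hi : ℝ := min 1 (c + ε) with hhi
  have hlohi : lo < hi := by
    rw [hlo, hhi]
    apply max_lt <;> apply lt_min
    · norm_num
    · linarith [hc.1, hε]
    · linarith [hc.2, hε]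
    · linarith [hε]
  set c' : ℝ := (lo + hi) / 2 with hc'
  have hc'mem : c' ∈ Ioo lo hi := ⟨by rw [hc']; linarith, by rw [hc']; linarith⟩
  have hsub : Ioo lo hi ⊆ Ioo (0:ℝ) 1 := fun z hz =>
    ⟨lt_of_le_of_lt (le_max_left _ _) hz.1, lt_of_lt_of_le hz.2 (min_le_left _ _)⟩
  have hsub2 : ∀ z ∈ Ioo lo hi, F z = z := by
    intro z hz
    have hz1 : z ∈ Ioo (0:ℝ) 1 := hsub hz
    have hz2 : dist z c < ε := by
      rw [Real.dist_eq, abs_lt]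
      constructor
      · have := hz.1; rw [hlo] at this; have := le_max_right (0:ℝ) (c-ε); linarith [lt_of_le_of_lt (le_max_right (0:ℝ) (c-ε)) hz.1]
      · have := lt_of_lt_of_le hz.2 (min_le_right (1:ℝ) (c+ε)); linarith
    have h := hball hz2
    have h2 : F z = F₂ z := hEq (Ioo_subset_Icc_self hz1)
    linarith
  apply eqOn_of_acc hF (hsub hc'mem)
  have hmem : Ioo lo hi ∈ 𝓝[≠] c' :=
    mem_nhdsWithin_of_mem_nhds (isOpen_Ioo.mem_nhds hc'mem)
  have : ∀ᶠ z in 𝓝[≠] c', F z = z := eventually_of_mem hmem hsub2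
  exact this.frequently
lemma fix_finite {F : ℝ → ℝ} (hF : AnalyticOn ℝ F (Icc 0 1)) (g : IntervalHomeo)
    (hgF : ∀ x : unitInterval, ((g x : unitInterval) : ℝ) = F (x : ℝ))
    (hinf : {x | x ∈ openI ∧ g x = x}.Infinite) : ∀ x, g x = x := by
  set Φ := {x | x ∈ openI ∧ g x = x} with hΦ
  -- extract a convergent subsequence of distinct fixed points
  let e := hinf.natEmbedding
  set w : ℕ → unitInterval := fun n => (e n : unitInterval) with hw
  have hwinj : Function.Injective w := fun n m h => e.injective (Subtype.ext h)
  have hwmem : ∀ n, w n ∈ Φ := fun n => (e n).2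
  obtain ⟨c, -, φ, hφ, hconv⟩ := isCompact_univ.tendsto_subseq (fun n => mem_univ (w n))
  set vr : ℕ → ℝ := fun k => ((w (φ k) : ℝ)) with hvr
  have hvrinj : Function.Injective vr :=
    fun n m h => hφ.injective (hwinj (Subtype.ext h))
  have hvrT : Tendsto vr atTop (𝓝 (c:ℝ)) :=
    (continuous_subtype_val.tendsto c).comp hconv
  have hne : ∀ᶠ k in atTop, vr k ≠ (c:ℝ) := by
    by_cases hex : ∃ k₀, vr k₀ = (c:ℝ)
    · obtain ⟨k₀, hk₀⟩ := hex
      filter_upwards [eventually_ne_atTop k₀] with k hk hc2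
      exact hk (hvrinj (hc2.trans hk₀.symm))
    · push_neg at hex; exact Eventually.of_forall hex
  have hT : Tendsto vr atTop (𝓝[≠] (c:ℝ)) := by
    rw [tendsto_nhdsWithin_iff]
    exact ⟨hvrT, hne⟩
  have hfreq : ∃ᶠ z in 𝓝[≠] (c:ℝ), z ∈ Ioo (0:ℝ) 1 ∧ F z = z := by
    apply hT.frequently
    apply Frequently.of_forall
    intro k
    refine ⟨(hwmem (φ k)).1, ?_⟩
    have h1 := hgF (w (φ k))
    rw [(hwmem (φ k)).2] at h1
    exact h1.symm
  have hEq : EqOn F id (Ioo (0:ℝ) 1) := eqOn_of_freq hF c.2 hfreq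
  intro x
  rcases eq_or_lt_of_le x.2.1 with h0 | h0
  · have : x = 0 := Subtype.ext h0.symm
    rw [this]; exact map_bot g
  rcases eq_or_lt_of_le x.2.2 with h1 | h1
  · have : x = 1 := Subtype.ext h1
    rw [this]; exact map_top g
  · apply Subtype.ext
    rw [hgF x]
    exact hEq ⟨h0, h1⟩
/-- inverse fixes fixed points -/
lemma inv_fix {g : IntervalHomeo} {a : unitInterval} (ha : g a = a) : g⁻¹ a = a := by
  conv_lhs => rw [← ha]
  exact g.symm_apply_apply a

lemma inv_lt_iff {g : IntervalHomeo} {y : unitInterval} : g⁻¹ y < y ↔ y < g y := by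
  rw [← g.lt_iff_lt (x := g⁻¹ y) (y := y)]
  show g (g.symm y) < g y ↔ y < g y
  rw [g.apply_symm_apply]

lemma lt_inv_iff {g : IntervalHomeo} {y : unitInterval} : y < g⁻¹ y ↔ g y < y := by
  rw [← g.lt_iff_lt (x := y) (y := g⁻¹ y)]
  show g y < g (g.symm y) ↔ g y < y
  rw [g.apply_symm_apply]

/-- if D is invariant and closed, and contains an interior point in the fixed-point-free
interval (a,b) with g fixing a and pushing down, then a ∈ D -/
lemma anchor_bot {G : Subgroup IntervalHomeo} {D : Set unitInterval} (hDc : IsClosed D)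
    (hDi : Invariant G D) {g : IntervalHomeo} (hg : g ∈ G) {a b x : unitInterval}
    (ha : g a = a) (hx1 : a < x) (hx2 : x < b) (hxD : x ∈ D)
    (hmono : ∀ y, a < y → y < b → g y < y) : a ∈ D :=
  limit_mem hDc (fun n => apply_mem hDi (pow_mem hg n) hxD)
    (tendsto_iterate_bot g ha hx1 hx2 hmono)

lemma anchor_top {G : Subgroup IntervalHomeo} {D : Set unitInterval} (hDc : IsClosed D)
    (hDi : Invariant G D) {g : IntervalHomeo} (hg : g ∈ G) {a b x : unitInterval}
    (hb : g b = b) (hx1 : a < x) (hx2 : x < b) (hxD : x ∈ D)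
    (hmono : ∀ y, a < y → y < b → y < g y) : b ∈ D :=
  limit_mem hDc (fun n => apply_mem hDi (pow_mem hg n) hxD)
    (tendsto_iterate_top g hb hx1 hx2 hmono)

lemma exists_anchor (G : Subgroup IntervalHomeo) {F : ℝ → ℝ}
    (hF : AnalyticOn ℝ F (Icc 0 1)) {g₀ : IntervalHomeo} (hg₀G : g₀ ∈ G)
    (hg₀F : ∀ x : unitInterval, ((g₀ x : unitInterval) : ℝ) = F (x : ℝ))
    {x₀ : unitInterval} (hx₀ : g₀ x₀ ≠ x₀) :
    ∃ J : Set unitInterval, IsClosed J ∧ J ⊆ openI ∧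
      ∀ D : Set unitInterval, IsClosed D → Invariant G D → (D ∩ openI).Nonempty →
        (D ∩ J).Nonempty := by
  set Φ := {x | x ∈ openI ∧ g₀ x = x} with hΦdef
  have hΦfin : Φ.Finite := by
    by_contra hcon
    exact hx₀ (fix_finite hF g₀ hg₀F hcon x₀)
  have hx₀I : x₀ ∈ openI := by
    rw [mem_openI]
    refine ⟨lt_of_le_of_ne bot_le ?_, lt_of_le_of_ne le_top ?_⟩
    · intro h; exact hx₀ (by rw [← h]; exact map_bot g₀)
    · intro h; exact hx₀ (by rw [h]; exact map_top g₀)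
  by_cases hΦ : Φ.Nonempty
  · -- J = Φ
    refine ⟨Φ, hΦfin.isClosed, fun z hz => hz.1, ?_⟩
    rintro D hDc hDi ⟨x, hxD, hxI⟩
    by_cases hxg : g₀ x = x
    · exact ⟨x, hxD, hxI, hxg⟩
    have hfixclosed : IsClosed {y : unitInterval | g₀ y = y} :=
      isClosed_eq (cont g₀) continuous_id
    obtain ⟨a, ⟨hax, hafix⟩, haub⟩ :=
      ((isClosed_Iic.inter hfixclosed).isCompact).exists_isGreatest
        ⟨0, bot_le, map_bot g₀⟩
    obtain ⟨b, ⟨hxb, hbfix⟩, hblb⟩ :=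
      ((isClosed_Ici.inter hfixclosed).isCompact).exists_isLeast
        ⟨1, le_top, map_top g₀⟩
    have halt : a < x := lt_of_le_of_ne hax (fun h => hxg (by rw [← h]; exact hafix))
    have hbgt : x < b := lt_of_le_of_ne hxb (fun h => hxg (by rw [h]; exact hbfix))
    have hnofix : ∀ y, a < y → y < b → g₀ y ≠ y := by
      intro y h1 h2 hy
      rcases le_total y x with h | h
      · exact absurd (haub ⟨h, hy⟩) (not_le.mpr h1)
      · exact absurd (hblb ⟨h, hy⟩) (not_le.mpr h2)
    obtain ⟨p, hpI, hpfix⟩ := hΦ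
    have hdi := sign_dichotomy g₀ hnofix
    rcases le_total p x with hpx | hpx
    · have hpa : p ≤ a := haub ⟨hpx, hpfix⟩
      have haI : a ∈ openI := by
        rw [mem_openI] at hpI ⊢
        exact ⟨lt_of_lt_of_le hpI.1 hpa, lt_trans halt (mem_openI.mp hxI).2⟩
      have haD : a ∈ D := by
        rcases hdi with h | h
        · exact anchor_bot hDc hDi (inv_mem hg₀G) (inv_fix hafix) halt hbgt hxD
            (fun y h1 h2 => inv_lt_iff.mpr (h y h1 h2))
        · exact anchor_bot hDc hDi hg₀G hafix halt hbgt hxD h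
      exact ⟨a, haD, haI, hafix⟩
    · have hbp : b ≤ p := hblb ⟨hpx, hpfix⟩
      have hbI : b ∈ openI := by
        rw [mem_openI] at hpI ⊢
        exact ⟨lt_trans (mem_openI.mp hxI).1 hbgt, lt_of_le_of_lt hbp hpI.2⟩
      have hbD : b ∈ D := by
        rcases hdi with h | h
        · exact anchor_top hDc hDi hg₀G hbfix halt hbgt hxD h
        · exact anchor_top hDc hDi (inv_mem hg₀G) (inv_fix hbfix) halt hbgt hxD
            (fun y h1 h2 => lt_inv_iff.mpr (h y h1 h2))
      exact ⟨b, hbD, hbI, hbfix⟩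
  · -- Φ empty
    rw [Set.not_nonempty_iff_eq_empty] at hΦ
    have hnofix : ∀ y : unitInterval, 0 < y → y < 1 → g₀ y ≠ y := by
      intro y h1 h2 hy
      have hmem : y ∈ Φ := ⟨mem_openI.mpr ⟨h1, h2⟩, hy⟩
      rw [hΦ] at hmem
      exact hmem
    obtain ⟨g, hgG, hgup⟩ : ∃ g : IntervalHomeo, g ∈ G ∧
        ∀ y : unitInterval, 0 < y → y < 1 → y < g y := by
      rcases sign_dichotomy g₀ hnofix with h | h
      · exact ⟨g₀, hg₀G, h⟩
      · exact ⟨g₀⁻¹, inv_mem hg₀G, fun y h1 h2 => lt_inv_iff.mpr (h y h1 h2)⟩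
    set t := x₀ with htdef
    have ht01 := mem_openI.mp hx₀I
    have hgt1 : g t < 1 := by
      calc g t < g 1 := g.strictMono ht01.2
        _ = 1 := map_top g
    refine ⟨Icc t (g t), isClosed_Icc, ?_, ?_⟩
    · intro z hz
      exact mem_openI.mpr ⟨lt_of_lt_of_le ht01.1 hz.1, lt_of_le_of_lt hz.2 hgt1⟩
    rintro D hDc hDi ⟨x, hxD, hxI⟩
    have hx01 := mem_openI.mp hxI
    set u : ℤ → unitInterval := fun n => (g^n) x with hudef
    have humem : ∀ n, u n ∈ openI := fun n => apply_mem_openI (g^n) hxI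
    have hurec : ∀ n : ℤ, u (n+1) = g (u n) := by
      intro n
      have h : g^(n+1) = g * g^n := by rw [add_comm, zpow_add, zpow_one]
      show (g^(n+1)) x = g ((g^n) x)
      rw [h]
      rfl
    have humono : StrictMono u := by
      apply strictMono_int_of_lt_succ
      intro n
      rw [hurec n]
      have h := mem_openI.mp (humem n)
      exact hgup _ h.1 h.2
    have hup : Tendsto (fun k : ℕ => (g^k) x) atTop (𝓝 1) :=
      tendsto_iterate_top g (map_top g) hx01.1 hx01.2 hgup
    have hTne : ∃ n : ℤ, t ≤ u n := by
      have hev : ∀ᶠ k : ℕ in atTop, (g^k) x ∈ Ioi t := hup.eventually (Ioi_mem_nhds ht01.2)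
      obtain ⟨k, hk⟩ := hev.exists
      refine ⟨(k:ℤ), ?_⟩
      have heq : u (k:ℤ) = (g^k) x := by
        show (g^(k:ℤ)) x = (g^k) x
        rw [zpow_natCast]
      rw [heq]
      exact le_of_lt hk
    have hTnotall : ∃ m : ℤ, ¬ t ≤ u m := by
      have hdown : Tendsto (fun k : ℕ => ((g⁻¹)^k) x) atTop (𝓝 0) :=
        tendsto_iterate_bot g⁻¹ (inv_fix (map_bot g)) hx01.1 hx01.2
          (fun y h1 h2 => inv_lt_iff.mpr (hgup y h1 h2))
      have hev : ∀ᶠ k : ℕ in atTop, ((g⁻¹)^k) x ∈ Iio t := hdown.eventually (Iio_mem_nhds ht01.1)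
      obtain ⟨k, hk⟩ := hev.exists
      refine ⟨-(k:ℤ), not_le.mpr ?_⟩
      have heq : u (-(k:ℤ)) = ((g⁻¹)^k) x := by
        show (g^(-(k:ℤ))) x = ((g⁻¹)^k) x
        rw [zpow_neg, ← inv_zpow, zpow_natCast]
      rw [heq]
      exact hk
    obtain ⟨m, hm⟩ := hTnotall
    have hbdd : ∃ b : ℤ, ∀ z : ℤ, t ≤ u z → b ≤ z := by
      refine ⟨m, fun z hz => ?_⟩
      by_contra hc
      push_neg at hc
      exact hm (le_trans hz (humono.monotone hc.le))
    obtain ⟨n₀, hn₀mem, hn₀least⟩ := Int.exists_least_of_bdd hbdd hTne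
    have hprev : ¬ t ≤ u (n₀ - 1) := by
      intro hc
      have := hn₀least _ hc
      omega
    have hn₀eq : u n₀ = g (u (n₀ - 1)) := by
      rw [← hurec (n₀-1)]
      norm_num
    refine ⟨u n₀, apply_mem hDi (zpow_mem hgG n₀) hxD, hn₀mem, ?_⟩
    rw [hn₀eq]
    exact (g.strictMono (not_le.mp hprev)).le


end Stmt2Aux

open Stmt2Aux in
/-- If every element of `G` is real-analytic on `[0,1]`, then every nonempty
`G`-invariant subset of `(0,1)` closed in `(0,1)` contains a nonempty `G`-invariant subset
closed in `(0,1)` that is minimal with these properties. -/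
theorem stmt2 (G : Subgroup IntervalHomeo)
    (han : ∀ g ∈ G, ∃ F : ℝ → ℝ, AnalyticOn ℝ F (Set.Icc (0 : ℝ) 1) ∧
      ∀ x : unitInterval, ((g x : unitInterval) : ℝ) = F (x : ℝ)) :
    ∀ M : Set unitInterval, M.Nonempty → Invariant G M → ClosedIn openI M →
      ∃ K ⊆ M, K.Nonempty ∧ Invariant G K ∧ ClosedIn openI K ∧
        ∀ K' ⊆ K, K'.Nonempty → Invariant G K' → ClosedIn openI K' → K' = K := by
  intro M hMne hMinv hMcl
  classical
  rcases Classical.em (∀ g ∈ G, ∀ x : unitInterval, (g : IntervalHomeo) x = x)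
    with htriv | htriv
  · -- trivial action: a singleton works
    obtain ⟨x, hx⟩ := hMne
    refine ⟨{x}, singleton_subset_iff.2 hx, singleton_nonempty x, ?_, ?_, ?_⟩
    · intro g hg
      rw [image_singleton, htriv g hg x]
    · exact ⟨singleton_subset_iff.2 (hMcl.1 hx), by
        rw [closure_singleton]; exact inter_subset_left⟩
    · intro K' hK' hK'ne _ _
      rcases Set.subset_singleton_iff_eq.mp hK' with h | h
      · exact absurd h hK'ne.ne_empty
      · exact h
  · push_neg at htriv
    obtain ⟨g₀, hg₀G, x₀, hx₀⟩ := htriv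
    obtain ⟨F, hF, hg₀F⟩ := han g₀ hg₀G
    obtain ⟨J, hJc, hJI, hJ⟩ := exists_anchor G hF hg₀G hg₀F hx₀
    set S : Set (Set unitInterval) :=
      {D | IsClosed D ∧ Invariant G D ∧ D ⊆ closure M ∧ (D ∩ openI).Nonempty} with hSdef
    have hCS : closure M ∈ S := by
      obtain ⟨m, hm⟩ := hMne
      exact ⟨isClosed_closure, invariant_closure hMinv, subset_rfl,
        ⟨m, subset_closure hm, hMcl.1 hm⟩⟩
    have hchain : ∀ c ⊆ S, IsChain (· ⊆ ·) c → c.Nonempty →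
        ∃ lb ∈ S, ∀ s ∈ c, lb ⊆ s := by
      intro c hcS hch hcne
      refine ⟨⋂₀ c, ⟨?_, ?_, ?_, ?_⟩, fun s hs => sInter_subset_of_mem hs⟩
      · exact isClosed_sInter fun D hD => (hcS hD).1
      · exact invariant_sInter fun D hD => (hcS hD).2.1
      · obtain ⟨D, hD⟩ := hcne
        exact (sInter_subset_of_mem hD).trans (hcS hD).2.2.1
      · -- use the anchor set J
        have hne : (⋂₀ ((fun D => D ∩ J) '' c)).Nonempty := by
          have : Nonempty ((fun D => D ∩ J) '' c) := (hcne.image _).to_subtype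
          apply IsCompact.nonempty_sInter_of_directed_nonempty_isCompact_isClosed
          · rintro _ ⟨D, hD, rfl⟩ _ ⟨E, hE, rfl⟩
            rcases hch.total hD hE with h | h
            · exact ⟨D ∩ J, ⟨D, hD, rfl⟩, subset_rfl.trans fun z hz => hz,
                fun z hz => ⟨h hz.1, hz.2⟩⟩
            · exact ⟨E ∩ J, ⟨E, hE, rfl⟩, fun z hz => ⟨h hz.1, hz.2⟩, subset_rfl⟩
          · rintro _ ⟨D, hD, rfl⟩
            exact hJ D (hcS hD).1 (hcS hD).2.1 (hcS hD).2.2.2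
          · rintro _ ⟨D, hD, rfl⟩
            exact ((hcS hD).1.inter hJc).isCompact
          · rintro _ ⟨D, hD, rfl⟩
            exact (hcS hD).1.inter hJc
        obtain ⟨z, hz⟩ := hne
        rw [mem_sInter] at hz
        refine ⟨z, ?_, ?_⟩
        · rw [mem_sInter]
          intro D hD
          exact (hz _ ⟨D, hD, rfl⟩).1
        · obtain ⟨D, hD⟩ := hcne
          exact hJI (hz _ ⟨D, hD, rfl⟩).2
    obtain ⟨D₀, hD₀sub, hD₀S, hD₀min⟩ := zorn_superset_nonempty S hchain _ hCS
    obtain ⟨hD₀c, hD₀inv, hD₀C, hD₀ne⟩ := hD₀S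
    refine ⟨D₀ ∩ openI, ?_, hD₀ne, invariant_inter_openI hD₀inv, ?_, ?_⟩
    · exact fun z hz => hMcl.2 ⟨hD₀C hz.1, hz.2⟩
    · refine ⟨inter_subset_right, fun z hz => ⟨?_, hz.2⟩⟩
      exact (closure_minimal inter_subset_left hD₀c) hz.1
    · intro K' hK'K hK'ne hK'inv hK'cl
      have h2 : closure K' ⊆ D₀ :=
        (closure_mono hK'K).trans (closure_minimal inter_subset_left hD₀c)
      have h1 : closure K' ∈ S := by
        refine ⟨isClosed_closure, invariant_closure hK'inv, h2.trans hD₀C, ?_⟩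
        obtain ⟨k, hk⟩ := hK'ne
        exact ⟨k, subset_closure hk, hK'cl.1 hk⟩
      have h3 : closure K' = D₀ := subset_antisymm h2 (hD₀min h1 h2)
      apply subset_antisymm hK'K
      intro z hz
      apply hK'cl.2
      rw [h3]
      exact ⟨hz.1, hz.2⟩
end

section
/- Let C₁ and C₂ be Cantor sets in ℝ, and for i = 1, 2 let lᵢ ∈ Cᵢ be a left endpoint of one of the bounded open intervals forming the complement of Cᵢ in ℝ (that is, lᵢ ∈ Cᵢ, lᵢ is not the maximum of Cᵢ, and there is ε > 0 with (lᵢ, lᵢ + ε) ∩ Cᵢ = ∅). Then there exists a homeomorphism h : ℝ → ℝ such that h(C₁) = C₂ and h(l₁) = l₂. -/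
/-!
The left endpoints of the bounded gaps of a Cantor set form a countable dense linear order
without endpoints, so by Cantor's back-and-forth theorem there is an order isomorphism `ψ`
between those of `C₁` and those of `C₂` with `ψ l₁ = l₂`. Mapping every bounded gap of `C₁`
affinely onto the corresponding gap of `C₂`, and the two unbounded complementary intervals by
translations, gives a strictly increasing map of `C₁ᶜ` onto `C₂ᶜ`. Both sets are dense, so this
map extends to an order isomorphism of `ℝ`, which is the required homeomorphism.
-/

open Set

section Order

variable {α β : Type*} [LinearOrder α] [LinearOrder β]

lemma OrderIso.exists_apply_eq_of_Iio_Ioi {a : α} {b : β} (e₁ : Iio a ≃o Iio b)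
    (e₂ : Ioi a ≃o Ioi b) : ∃ e : α ≃o β, e a = b := by
  classical
  let g : α → β := fun x =>
    if h : x < a then e₁ ⟨x, h⟩ else if h' : a < x then e₂ ⟨x, h'⟩ else b
  have g_lt (x : α) (h : x < a) : g x = e₁ ⟨x, h⟩ := dif_pos h
  have g_gt (x : α) (h : a < x) : g x = e₂ ⟨x, h⟩ := by simp [g, h.not_gt, h]
  have g_a : g a = b := by simp [g]
  have mono : StrictMono g := by
    intro x y hxy
    rcases lt_trichotomy x a with hx | hx | hx <;> rcases lt_trichotomy y a with hy | hy | hy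
    · rw [g_lt x hx, g_lt y hy]; exact e₁.strictMono hxy
    · rw [g_lt x hx, hy, g_a]; exact (e₁ _).2
    · rw [g_lt x hx, g_gt y hy]; exact (e₁ _).2.trans (e₂ _).2
    · order
    · order
    · rw [hx, g_a, g_gt y hy]; exact (e₂ _).2
    · order
    · order
    · rw [g_gt x hx, g_gt y hy]; exact e₂.strictMono hxy
  have surj : Function.Surjective g := by
    intro y
    rcases lt_trichotomy y b with hy | rfl | hy
    · obtain ⟨⟨x, hx⟩, hex⟩ := e₁.surjective ⟨y, hy⟩
      exact ⟨x, by rw [g_lt x hx, hex]⟩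
    · exact ⟨a, g_a⟩
    · obtain ⟨⟨x, hx⟩, hex⟩ := e₂.surjective ⟨y, hy⟩
      exact ⟨x, by rw [g_gt x hx, hex]⟩
  exact ⟨mono.orderIsoOfSurjective g surj, g_a⟩

lemma Order.exists_orderIso_apply_eq [Countable α] [DenselyOrdered α] [NoMinOrder α]
    [NoMaxOrder α] [Countable β] [DenselyOrdered β] [NoMinOrder β] [NoMaxOrder β]
    (a : α) (b : β) : ∃ e : α ≃o β, e a = b := by
  obtain ⟨e₁⟩ := Order.iso_of_countable_dense (Iio a) (Iio b)
  obtain ⟨e₂⟩ := Order.iso_of_countable_dense (Ioi a) (Ioi b)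
  exact OrderIso.exists_apply_eq_of_Iio_Ioi e₁ e₂

end Order

lemma OrderIso.exists_strictMonoOn_image_eq {α : Type*} [Preorder α] {s t : Set α}
    (e : s ≃o t) :
    ∃ ψ : α → α, StrictMonoOn ψ s ∧ ψ '' s = t ∧ ∀ x : s, ψ x = e x := by
  classical
  let ψ : α → α := fun x => if h : x ∈ s then e ⟨x, h⟩ else x
  have ψ_eq (x : s) : ψ x = e x := dif_pos x.2
  refine ⟨ψ, fun x hx y hy hxy => ?_, ?_, ψ_eq⟩
  · rw [ψ_eq ⟨x, hx⟩, ψ_eq ⟨y, hy⟩]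
    exact e.strictMono hxy
  · ext y
    refine ⟨?_, fun hy => ⟨e.symm ⟨y, hy⟩, (e.symm _).2, by simp [ψ_eq]⟩⟩
    rintro ⟨x, hx, rfl⟩
    exact ψ_eq ⟨x, hx⟩ ▸ (e _).2

section Extension

variable {α β : Type*} [LinearOrder α] [TopologicalSpace α] [OrderTopology α]
  [DenselyOrdered α] [NoMinOrder α] [NoMaxOrder α] [PreconnectedSpace α]
  [ConditionallyCompleteLinearOrder β] [TopologicalSpace β] [OrderTopology β]
  [DenselyOrdered β] [NoMinOrder β] [NoMaxOrder β]

-- The extension `x ↦ sup f(D ∩ (-∞, x])` is continuous, being monotone with dense range, hence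
-- surjective by the intermediate value theorem.
theorem exists_orderIso_eqOn_of_dense {D : Set α} {f : α → β} (hD : Dense D)
    (hfD : Dense (f '' D)) (hf : StrictMonoOn f D) : ∃ e : α ≃o β, EqOn e f D := by
  let g : α → β := fun x => sSup (f '' (D ∩ Iic x))
  have nonempty (x : α) : (f '' (D ∩ Iic x)).Nonempty := by
    obtain ⟨d, hd, hdx⟩ := hD.exists_lt x
    exact ⟨f d, d, ⟨hd, hdx.le⟩, rfl⟩
  have bdd (x : α) : BddAbove (f '' (D ∩ Iic x)) := by
    obtain ⟨d, hd, hxd⟩ := hD.exists_gt x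
    refine ⟨f d, ?_⟩
    rintro _ ⟨e, ⟨he, hex⟩, rfl⟩
    exact (hf he hd (hex.trans_lt hxd)).le
  have eqOn : EqOn g f D := fun d hd =>
    IsGreatest.csSup_eq ⟨⟨d, ⟨hd, le_rfl⟩, rfl⟩, by
      rintro _ ⟨e, ⟨he, hed⟩, rfl⟩
      exact hf.monotoneOn he hd hed⟩
  have mono : StrictMono g := by
    intro x y hxy
    obtain ⟨d, hd, hxd, hdy⟩ := hD.exists_between hxy
    obtain ⟨d', hd', hdd', hd'y⟩ := hD.exists_between hdy
    calc g x ≤ f d := csSup_le (nonempty x) <| by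
            rintro _ ⟨e, ⟨he, hex⟩, rfl⟩
            exact (hf he hd (hex.trans_lt hxd)).le
      _ < f d' := hf hd hd' hdd'
      _ ≤ g y := le_csSup (bdd y) ⟨d', ⟨hd', hd'y.le⟩, rfl⟩
  have dense : DenseRange g := hfD.mono <| by
    rintro _ ⟨d, hd, rfl⟩
    exact ⟨d, eqOn hd⟩
  have surj : Function.Surjective g := fun y => by
    obtain ⟨_, ⟨d₁, hd₁, rfl⟩, hy₁⟩ := hfD.exists_lt y
    obtain ⟨_, ⟨d₂, hd₂, rfl⟩, hy₂⟩ := hfD.exists_gt y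
    exact mem_range_of_exists_le_of_exists_ge (mono.monotone.continuous_of_denseRange dense)
      ⟨d₁, (eqOn hd₁).trans_le hy₁.le⟩ ⟨d₂, hy₂.le.trans (eqOn hd₂).ge⟩
  exact ⟨mono.orderIsoOfSurjective g surj, eqOn⟩

end Extension

section Gaps

variable {C : Set ℝ} {p q x : ℝ}

def IsGap (C : Set ℝ) (p q : ℝ) : Prop :=
  p ∈ C ∧ q ∈ C ∧ p < q ∧ Disjoint (Ioo p q) C

noncomputable def succPt (C : Set ℝ) (x : ℝ) : ℝ := sInf (C ∩ Ioi x)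

noncomputable def predPt (C : Set ℝ) (x : ℝ) : ℝ := sSup (C ∩ Iic x)

def gapLeftEnds (C : Set ℝ) : Set ℝ := {p | IsGap C p (succPt C p)}

lemma IsGap.right_le_of_mem (h : IsGap C p q) {c : ℝ} (hc : c ∈ C) (hpc : p < c) : q ≤ c :=
  not_lt.1 fun hcq => disjoint_left.1 h.2.2.2 ⟨hpc, hcq⟩ hc

lemma IsGap.le_left_of_mem (h : IsGap C p q) {c : ℝ} (hc : c ∈ C) (hcq : c < q) : c ≤ p :=
  not_lt.1 fun hpc => disjoint_left.1 h.2.2.2 ⟨hpc, hcq⟩ hc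

lemma IsGap.succPt_eq (h : IsGap C p q) (hx : x ∈ Ico p q) : succPt C x = q :=
  IsLeast.csInf_eq ⟨⟨h.2.1, hx.2⟩, fun _ hc => h.right_le_of_mem hc.1 (hx.1.trans_lt hc.2)⟩

lemma IsGap.predPt_eq (h : IsGap C p q) (hx : x ∈ Ico p q) : predPt C x = p :=
  IsGreatest.csSup_eq ⟨⟨h.1, hx.1⟩, fun _ hc => h.le_left_of_mem hc.1 (hc.2.trans_lt hx.2)⟩

lemma IsGap.mem_gapLeftEnds (h : IsGap C p q) : p ∈ gapLeftEnds C := by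
  show IsGap C p (succPt C p)
  rwa [h.succPt_eq (left_mem_Ico.2 h.2.2.1)]

lemma exists_isGap_of_notMem (hC : IsCompact C) {a b : ℝ} (ha : a ∈ C) (hb : b ∈ C)
    (hx : x ∈ Icc a b) (hxC : x ∉ C) : ∃ p q, IsGap C p q ∧ x ∈ Ioo p q ∧ a ≤ p ∧ q ≤ b := by
  have hp : sSup (C ∩ Iic x) ∈ C ∩ Iic x :=
    (hC.isClosed.inter isClosed_Iic).csSup_mem ⟨a, ha, hx.1⟩ ⟨x, fun _ h => h.2⟩
  have hq : sInf (C ∩ Ici x) ∈ C ∩ Ici x :=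
    (hC.isClosed.inter isClosed_Ici).csInf_mem ⟨b, hb, hx.2⟩ ⟨x, fun _ h => h.2⟩
  have hpx : sSup (C ∩ Iic x) < x := hp.2.lt_of_ne fun h => hxC (h ▸ hp.1)
  have hxq : x < sInf (C ∩ Ici x) := hq.2.lt_of_ne' fun h => hxC (h ▸ hq.1)
  refine ⟨_, _, ⟨hp.1, hq.1, hpx.trans hxq, disjoint_left.2 fun c hc hcC => ?_⟩, ⟨hpx, hxq⟩,
    le_csSup ⟨x, fun _ h => h.2⟩ ⟨ha, hx.1⟩, csInf_le ⟨x, fun _ h => h.2⟩ ⟨hb, hx.2⟩⟩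
  rcases le_total c x with hcx | hxc
  · exact hc.1.not_ge (le_csSup ⟨x, fun _ h => h.2⟩ ⟨hcC, hcx⟩)
  · exact hc.2.not_ge (csInf_le ⟨x, fun _ h => h.2⟩ ⟨hcC, hxc⟩)

lemma mem_gapLeftEnds_of_gap (hC : IsCompact C) (hp : p ∈ C) (hmax : ∃ x ∈ C, p < x)
    (hgap : ∃ ε > 0, Ioo p (p + ε) ∩ C = ∅) : p ∈ gapLeftEnds C := by
  obtain ⟨b, hb, hpb⟩ := hmax
  obtain ⟨ε, hε, hgap⟩ := hgap
  have hgap : Disjoint (Ioo p (p + ε)) C := disjoint_iff_inter_eq_empty.2 hgap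
  have hm : p + ε / 2 ∈ Ioo p (p + ε) := ⟨by linarith, by linarith⟩
  have hεb : p + ε ≤ b := not_lt.1 fun h => disjoint_left.1 hgap ⟨hpb, h⟩ hb
  obtain ⟨p', q, hgap', hm', hpp', -⟩ :=
    exists_isGap_of_notMem hC hp hb ⟨hm.1.le, by linarith⟩ (disjoint_left.1 hgap hm)
  have hp'p : p' ≤ p := not_lt.1 fun h => disjoint_left.1 hgap ⟨h, hm'.1.trans hm.2⟩ hgap'.1
  obtain rfl := le_antisymm hp'p hpp'
  exact hgap'.mem_gapLeftEnds

lemma IsCompact.compl_eq_iUnion_gaps (hC : IsCompact C) (hn : C.Nonempty) :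
    Cᶜ = Iio (sInf C) ∪ Ioi (sSup C) ∪ ⋃ p ∈ gapLeftEnds C, Ioo p (succPt C p) := by
  ext x
  simp only [mem_compl_iff, mem_union, mem_iUnion₂, mem_Iio, mem_Ioi]
  constructor
  · intro hx
    by_contra! h
    obtain ⟨p, q, hg, hxg, -⟩ := exists_isGap_of_notMem hC (hC.sInf_mem hn) (hC.sSup_mem hn)
      ⟨h.1.1, h.1.2⟩ hx
    exact h.2 p hg.mem_gapLeftEnds (by rwa [hg.succPt_eq (left_mem_Ico.2 hg.2.2.1)])
  · rintro ((hx | hx) | ⟨p, hp, hx⟩) hxC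
    · exact hx.not_ge (csInf_le hC.bddBelow hxC)
    · exact hx.not_ge (le_csSup hC.bddAbove hxC)
    · exact disjoint_left.1 hp.2.2.2 hx hxC

lemma Perfect.not_disjoint_Ioo (hC : Perfect C) (hx : x ∈ C) {u v : ℝ} (hu : u < x)
    (hv : x < v) (hl : Disjoint (Ioo u x) C) : ¬ Disjoint (Ioo x v) C := by
  intro hr
  obtain ⟨y, ⟨hy, hyC⟩, hyx⟩ :=
    preperfect_iff_nhds.1 hC.acc x hx _ (isOpen_Ioo.mem_nhds ⟨hu, hv⟩)
  rcases hyx.lt_or_gt with h | h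
  · exact disjoint_left.1 hl ⟨hy.1, h⟩ hyC
  · exact disjoint_left.1 hr ⟨h, hy.2⟩ hyC

lemma IsGap.not_isGap (hC : Perfect C) (h : IsGap C p q) {r : ℝ} : ¬ IsGap C q r :=
  fun h' => hC.not_disjoint_Ioo h.2.1 h.2.2.1 h'.2.2.1 h.2.2.2 h'.2.2.2

lemma IsGap.sInf_lt (hC : IsCompact C) (hP : Perfect C) (h : IsGap C p q) : sInf C < p := by
  by_contra! hp
  refine hP.not_disjoint_Ioo h.1 (sub_one_lt p) h.2.2.1 (disjoint_left.2 fun c hc hcC => ?_)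
    h.2.2.2
  exact hc.2.not_ge (hp.trans (csInf_le hC.bddBelow hcC))

lemma IsGap.lt_sSup (hC : IsCompact C) (hP : Perfect C) (h : IsGap C p q) : q < sSup C := by
  by_contra! hq
  refine hP.not_disjoint_Ioo h.2.1 h.2.2.1 (lt_add_one q) h.2.2.2
    (disjoint_left.2 fun c hc hcC => ?_)
  exact hc.1.not_ge ((le_csSup hC.bddAbove hcC).trans hq)

lemma IsTotallyDisconnected.exists_notMem_Ioo (hT : IsTotallyDisconnected C) {a b : ℝ}
    (hab : a < b) : ∃ x ∈ Ioo a b, x ∉ C := by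
  by_contra! h
  obtain ⟨m, ham, hmb⟩ := exists_between hab
  obtain ⟨m', hmm', hm'b⟩ := exists_between hmb
  have := hT (Icc m m') (fun y hy => h y ⟨ham.trans_le hy.1, hy.2.trans_lt hm'b⟩)
    isPreconnected_Icc
  exact (subsingleton_Icc_iff.1 this).not_gt hmm'

lemma IsTotallyDisconnected.dense_compl (hT : IsTotallyDisconnected C) : Dense Cᶜ :=
  dense_of_exists_between fun _ _ hab =>
    let ⟨x, hx, hxC⟩ := hT.exists_notMem_Ioo hab
    ⟨x, hxC, hx⟩

lemma IsTotallyDisconnected.exists_isGap (hC : IsCompact C) (hT : IsTotallyDisconnected C)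
    {a b : ℝ} (ha : a ∈ C) (hb : b ∈ C) (hab : a < b) :
    ∃ p q, IsGap C p q ∧ a ≤ p ∧ q ≤ b := by
  obtain ⟨x, hx, hxC⟩ := hT.exists_notMem_Ioo hab
  obtain ⟨p, q, hg, -, hap, hqb⟩ :=
    exists_isGap_of_notMem hC ha hb (Ioo_subset_Icc_self hx) hxC
  exact ⟨p, q, hg, hap, hqb⟩

end Gaps

section GapLeftEnds

variable {C : Set ℝ}

lemma countable_gapLeftEnds : (gapLeftEnds C).Countable := by
  have disj {p p' : ℝ} (hp : p ∈ gapLeftEnds C) (hp' : p' ∈ gapLeftEnds C) (h : p < p') :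
      Disjoint (Ioo p (succPt C p)) (Ioo p' (succPt C p')) :=
    disjoint_left.2 fun _ hx hx' => (hx.2.trans_le (hp.right_le_of_mem hp'.1 h)).not_gt hx'.1
  refine PairwiseDisjoint.countable_of_isOpen (fun p hp p' hp' hne => ?_)
    (fun _ _ => isOpen_Ioo) (fun p hp => nonempty_Ioo.2 hp.2.2.1)
  rcases hne.lt_or_gt with h | h
  exacts [disj hp hp' h, (disj hp' hp h).symm]

variable (hC : IsCompact C) (hP : Perfect C) (hT : IsTotallyDisconnected C)
include hC hP hT

lemma denselyOrdered_gapLeftEnds : DenselyOrdered (gapLeftEnds C) := by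
  refine ⟨fun ⟨p, hp⟩ ⟨p', hp'⟩ h => ?_⟩
  change p < p' at h
  have hq : succPt C p < p' :=
    (hp.right_le_of_mem hp'.1 h).lt_of_ne fun hq => hp.not_isGap hP (hq ▸ hp')
  obtain ⟨r, s, hr, hqr, hsp'⟩ := hT.exists_isGap hC hp.2.1 hp'.1 hq
  exact ⟨⟨r, hr.mem_gapLeftEnds⟩, hp.2.2.1.trans_le hqr, hr.2.2.1.trans_le hsp'⟩

lemma noMinOrder_gapLeftEnds : NoMinOrder (gapLeftEnds C) := by
  refine ⟨fun ⟨p, hp⟩ => ?_⟩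
  obtain ⟨r, s, hr, -, hsp⟩ :=
    hT.exists_isGap hC (hC.sInf_mem ⟨p, hp.1⟩) hp.1 (hp.sInf_lt hC hP)
  exact ⟨⟨r, hr.mem_gapLeftEnds⟩, hr.2.2.1.trans_le hsp⟩

lemma noMaxOrder_gapLeftEnds : NoMaxOrder (gapLeftEnds C) := by
  refine ⟨fun ⟨p, hp⟩ => ?_⟩
  obtain ⟨r, s, hr, hqr, -⟩ :=
    hT.exists_isGap hC hp.2.1 (hC.sSup_mem ⟨p, hp.1⟩) (hp.lt_sSup hC hP)
  exact ⟨⟨r, hr.mem_gapLeftEnds⟩, hp.2.2.1.trans_le hqr⟩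

end GapLeftEnds

lemma exists_strictMonoOn_gapLeftEnds {C₁ C₂ : Set ℝ} (h₁c : IsCompact C₁) (h₁p : Perfect C₁)
    (h₁t : IsTotallyDisconnected C₁) (h₂c : IsCompact C₂) (h₂p : Perfect C₂)
    (h₂t : IsTotallyDisconnected C₂) {l₁ l₂ : ℝ} (hl₁ : l₁ ∈ gapLeftEnds C₁)
    (hl₂ : l₂ ∈ gapLeftEnds C₂) :
    ∃ ψ : ℝ → ℝ, StrictMonoOn ψ (gapLeftEnds C₁) ∧ ψ '' gapLeftEnds C₁ = gapLeftEnds C₂ ∧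
      ψ l₁ = l₂ := by
  have := (countable_gapLeftEnds (C := C₁)).to_subtype
  have := (countable_gapLeftEnds (C := C₂)).to_subtype
  have := denselyOrdered_gapLeftEnds h₁c h₁p h₁t
  have := denselyOrdered_gapLeftEnds h₂c h₂p h₂t
  have := noMinOrder_gapLeftEnds h₁c h₁p h₁t
  have := noMinOrder_gapLeftEnds h₂c h₂p h₂t
  have := noMaxOrder_gapLeftEnds h₁c h₁p h₁t
  have := noMaxOrder_gapLeftEnds h₂c h₂p h₂t
  obtain ⟨e, he⟩ := Order.exists_orderIso_apply_eq (⟨l₁, hl₁⟩ : gapLeftEnds C₁)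
    (⟨l₂, hl₂⟩ : gapLeftEnds C₂)
  obtain ⟨ψ, hψ, himg, hψe⟩ := e.exists_strictMonoOn_image_eq
  exact ⟨ψ, hψ, himg, by rw [hψe ⟨l₁, hl₁⟩, he]⟩

section GapMap

noncomputable def affineThrough (p q p' q' x : ℝ) : ℝ := (q' - p') / (q - p) * (x - p) + p'

lemma strictMono_affineThrough {p q p' q' : ℝ} (h : p < q) (h' : p' < q') :
    StrictMono (affineThrough p q p' q') := fun _ _ hxy =>
  (add_lt_add_iff_right p').2 <| mul_lt_mul_of_pos_left (sub_lt_sub_right hxy p)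
    (div_pos (sub_pos.2 h') (sub_pos.2 h))

lemma image_affineThrough_Ioo {p q p' q' : ℝ} (h : p < q) (h' : p' < q') :
    affineThrough p q p' q' '' Ioo p q = Ioo p' q' := by
  set k := (q' - p') / (q - p)
  have hk : k * (q - p) = q' - p' := div_mul_cancel₀ _ (sub_ne_zero.2 h.ne')
  have : affineThrough p q p' q' = fun x => k * x + (p' - k * p) := by
    funext x; simp only [affineThrough, k]; ring
  rw [this, image_affine_Ioo (div_pos (sub_pos.2 h') (sub_pos.2 h))]
  congr 1 <;> linarith

variable (C₁ C₂ : Set ℝ) (ψ : ℝ → ℝ)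

-- Only the values off `C₁` matter: on a gap `(p, q)` of `C₁`, `predPt C₁ x = p` and
-- `succPt C₁ x = q`.
noncomputable def gapMap (x : ℝ) : ℝ :=
  if x < sInf C₁ then x + (sInf C₂ - sInf C₁)
  else if sSup C₁ < x then x + (sSup C₂ - sSup C₁)
  else affineThrough (predPt C₁ x) (succPt C₁ x) (ψ (predPt C₁ x))
    (succPt C₂ (ψ (predPt C₁ x))) x

variable {C₁ C₂ ψ}

lemma gapMap_of_lt {x : ℝ} (hx : x < sInf C₁) : gapMap C₁ C₂ ψ x = x + (sInf C₂ - sInf C₁) :=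
  if_pos hx

lemma gapMap_of_gt (hC : IsCompact C₁) (hn : C₁.Nonempty) {x : ℝ} (hx : sSup C₁ < x) :
    gapMap C₁ C₂ ψ x = x + (sSup C₂ - sSup C₁) := by
  have : ¬ x < sInf C₁ := ((csInf_le_csSup hn hC.bddBelow hC.bddAbove).trans hx.le).not_gt
  rw [gapMap, if_neg this, if_pos hx]

lemma gapMap_of_mem_Ioo (hC : IsCompact C₁) {p q x : ℝ} (h : IsGap C₁ p q) (hx : x ∈ Ioo p q) :
    gapMap C₁ C₂ ψ x = affineThrough p q (ψ p) (succPt C₂ (ψ p)) x := by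
  have h₁ : ¬ x < sInf C₁ := ((csInf_le hC.bddBelow h.1).trans hx.1.le).not_gt
  have h₂ : ¬ sSup C₁ < x := (hx.2.le.trans (le_csSup hC.bddAbove h.2.1)).not_gt
  rw [gapMap, if_neg h₁, if_neg h₂, h.predPt_eq (Ioo_subset_Ico_self hx),
    h.succPt_eq (Ioo_subset_Ico_self hx)]

lemma image_gapMap_Iio : gapMap C₁ C₂ ψ '' Iio (sInf C₁) = Iio (sInf C₂) := by
  have : EqOn (gapMap C₁ C₂ ψ) (· + (sInf C₂ - sInf C₁)) (Iio (sInf C₁)) :=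
    fun _ hx => gapMap_of_lt hx
  rw [this.image_eq, image_add_const_Iio, add_sub_cancel]

lemma image_gapMap_Ioi (hC : IsCompact C₁) (hn : C₁.Nonempty) :
    gapMap C₁ C₂ ψ '' Ioi (sSup C₁) = Ioi (sSup C₂) := by
  have : EqOn (gapMap C₁ C₂ ψ) (· + (sSup C₂ - sSup C₁)) (Ioi (sSup C₁)) :=
    fun _ hx => gapMap_of_gt hC hn hx
  rw [this.image_eq, image_add_const_Ioi, add_sub_cancel]

lemma image_gapMap_gap (hC : IsCompact C₁) {p : ℝ} (hp : p ∈ gapLeftEnds C₁)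
    (hψp : ψ p ∈ gapLeftEnds C₂) :
    gapMap C₁ C₂ ψ '' Ioo p (succPt C₁ p) = Ioo (ψ p) (succPt C₂ (ψ p)) := by
  have : EqOn (gapMap C₁ C₂ ψ) (affineThrough p (succPt C₁ p) (ψ p) (succPt C₂ (ψ p)))
      (Ioo p (succPt C₁ p)) := fun _ hx => gapMap_of_mem_Ioo hC hp hx
  rw [this.image_eq, image_affineThrough_Ioo hp.2.2.1 hψp.2.2.1]

lemma image_gapMap_compl (h₁c : IsCompact C₁) (h₁n : C₁.Nonempty) (h₂c : IsCompact C₂)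
    (h₂n : C₂.Nonempty) (hψ : ψ '' gapLeftEnds C₁ = gapLeftEnds C₂) :
    gapMap C₁ C₂ ψ '' C₁ᶜ = C₂ᶜ := by
  rw [h₁c.compl_eq_iUnion_gaps h₁n, h₂c.compl_eq_iUnion_gaps h₂n, image_union, image_union,
    image_gapMap_Iio, image_gapMap_Ioi h₁c h₁n, image_iUnion₂, ← hψ, biUnion_image]
  congr 1
  refine iUnion₂_congr fun p hp => image_gapMap_gap h₁c hp ?_
  exact hψ ▸ mem_image_of_mem ψ hp

lemma strictMonoOn_gapMap (h₁c : IsCompact C₁) (h₁n : C₁.Nonempty) (h₂c : IsCompact C₂)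
    (h₂n : C₂.Nonempty) (hψ : StrictMonoOn ψ (gapLeftEnds C₁))
    (hψL : MapsTo ψ (gapLeftEnds C₁) (gapLeftEnds C₂)) :
    StrictMonoOn (gapMap C₁ C₂ ψ) C₁ᶜ := by
  have hab₁ := csInf_le_csSup h₁n h₁c.bddBelow h₁c.bddAbove
  have hab₂ := csInf_le_csSup h₂n h₂c.bddBelow h₂c.bddAbove
  have left {x} (hx : x < sInf C₁) : gapMap C₁ C₂ ψ x < sInf C₂ := by
    rw [gapMap_of_lt hx]; linarith
  have right {x} (hx : sSup C₁ < x) : sSup C₂ < gapMap C₁ C₂ ψ x := by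
    rw [gapMap_of_gt h₁c h₁n hx]; linarith
  have gap {p x} (hp : p ∈ gapLeftEnds C₁) (hx : x ∈ Ioo p (succPt C₁ p)) :
      gapMap C₁ C₂ ψ x ∈ Ioo (ψ p) (succPt C₂ (ψ p)) :=
    image_gapMap_gap h₁c hp (hψL hp) ▸ mem_image_of_mem _ hx
  have sInf₁_le {p} (hp : p ∈ gapLeftEnds C₁) : sInf C₁ ≤ p := csInf_le h₁c.bddBelow hp.1
  have le_sSup₁ {p} (hp : p ∈ gapLeftEnds C₁) : succPt C₁ p ≤ sSup C₁ :=
    le_csSup h₁c.bddAbove hp.2.1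
  have sInf₂_le {p} (hp : p ∈ gapLeftEnds C₁) : sInf C₂ ≤ ψ p := csInf_le h₂c.bddBelow (hψL hp).1
  have le_sSup₂ {p} (hp : p ∈ gapLeftEnds C₁) : succPt C₂ (ψ p) ≤ sSup C₂ :=
    le_csSup h₂c.bddAbove (hψL hp).2.1
  intro x hx y hy hxy
  rw [h₁c.compl_eq_iUnion_gaps h₁n, mem_union, mem_union, mem_iUnion₂] at hx hy
  rcases hx with (hx | hx) | ⟨p, hp, hx⟩ <;> rcases hy with (hy | hy) | ⟨p', hp', hy⟩
  · rw [gapMap_of_lt hx, gapMap_of_lt hy]; linarith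
  · linarith [left hx, right hy]
  · linarith [left hx, (gap hp' hy).1, sInf₂_le hp']
  · linarith [mem_Iio.1 hy, mem_Ioi.1 hx]
  · rw [gapMap_of_gt h₁c h₁n hx, gapMap_of_gt h₁c h₁n hy]; linarith
  · linarith [mem_Ioi.1 hx, hy.2, le_sSup₁ hp']
  · linarith [mem_Iio.1 hy, hx.1, sInf₁_le hp]
  · linarith [(gap hp hx).2, le_sSup₂ hp, right hy]
  · rcases lt_trichotomy p p' with h | rfl | h
    · linarith [(gap hp hx).2, (hψL hp).right_le_of_mem (hψL hp').1 (hψ hp hp' h), (gap hp' hy).1]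
    · rw [gapMap_of_mem_Ioo h₁c hp hx, gapMap_of_mem_Ioo h₁c hp hy]
      exact strictMono_affineThrough hp.2.2.1 (hψL hp).2.2.1 hxy
    · linarith [hy.2, hp'.right_le_of_mem hp.1 h, hx.1]

end GapMap

lemma OrderIso.apply_eq_of_image_Ioo_eq {α β : Type*} [Preorder α]
    [ConditionallyCompleteLinearOrder β] [DenselyOrdered β] (e : α ≃o β)
    {a b : α} {c d : β} (hab : a < b) (h : e '' Ioo a b = Ioo c d) : e a = c := by
  rw [e.image_Ioo] at h
  have hcd : c < d := nonempty_Ioo.1 (h ▸ nonempty_Ioo.2 (e.lt_iff_lt.2 hab))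
  simpa only [csInf_Ioo (e.lt_iff_lt.2 hab), csInf_Ioo hcd] using congrArg sInf h

theorem stmt6_general (C₁ C₂ : Set ℝ)
    (h₁c : IsCompact C₁) (h₁p : Perfect C₁)
    (h₁t : IsTotallyDisconnected C₁)
    (h₂c : IsCompact C₂) (h₂p : Perfect C₂)
    (h₂t : IsTotallyDisconnected C₂)
    (l₁ l₂ : ℝ) (hl₁ : l₁ ∈ C₁) (hl₂ : l₂ ∈ C₂)
    (hl₁max : ∃ x ∈ C₁, l₁ < x) (hl₂max : ∃ x ∈ C₂, l₂ < x)
    (hl₁gap : ∃ ε > 0, Set.Ioo l₁ (l₁ + ε) ∩ C₁ = ∅)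
    (hl₂gap : ∃ ε > 0, Set.Ioo l₂ (l₂ + ε) ∩ C₂ = ∅) :
    ∃ h : ℝ ≃ₜ ℝ, ⇑h '' C₁ = C₂ ∧ h l₁ = l₂ := by
  have hL₁ := mem_gapLeftEnds_of_gap h₁c hl₁ hl₁max hl₁gap
  have hL₂ := mem_gapLeftEnds_of_gap h₂c hl₂ hl₂max hl₂gap
  obtain ⟨ψ, hψ, hψL, hψl⟩ := exists_strictMonoOn_gapLeftEnds h₁c h₁p h₁t h₂c h₂p h₂t hL₁ hL₂
  have himg := image_gapMap_compl h₁c ⟨l₁, hl₁⟩ h₂c ⟨l₂, hl₂⟩ hψL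
  obtain ⟨e, he⟩ := exists_orderIso_eqOn_of_dense h₁t.dense_compl (himg ▸ h₂t.dense_compl)
    (strictMonoOn_gapMap h₁c ⟨l₁, hl₁⟩ h₂c ⟨l₂, hl₂⟩ hψ (hψL ▸ mapsTo_image ψ _))
  refine ⟨e.toHomeomorph, ?_, ?_⟩
  · have := he.image_eq.trans himg
    rwa [image_compl_eq e.bijective, compl_inj_iff] at this
  · refine e.apply_eq_of_image_Ioo_eq (d := succPt C₂ l₂) hL₁.2.2.1 ?_
    have hsub : Ioo l₁ (succPt C₁ l₁) ⊆ C₁ᶜ := fun _ hx => disjoint_left.1 hL₁.2.2.2 hx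
    rw [(he.mono hsub).image_eq, image_gapMap_gap h₁c hL₁ (hψl ▸ hL₂), hψl]

/-- Any two Cantor sets in `ℝ` (nonempty compact perfect totally
disconnected sets) are ambiently homeomorphic by a homeomorphism of `ℝ` taking a chosen
left endpoint of a bounded complementary interval of the first to such a chosen point of
the second. -/
theorem stmt6 (C₁ C₂ : Set ℝ)
    (h₁c : IsCompact C₁) (h₁n : C₁.Nonempty) (h₁p : Perfect C₁)
    (h₁t : IsTotallyDisconnected C₁)
    (h₂c : IsCompact C₂) (h₂n : C₂.Nonempty) (h₂p : Perfect C₂)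
    (h₂t : IsTotallyDisconnected C₂)
    (l₁ l₂ : ℝ) (hl₁ : l₁ ∈ C₁) (hl₂ : l₂ ∈ C₂)
    (hl₁max : ∃ x ∈ C₁, l₁ < x) (hl₂max : ∃ x ∈ C₂, l₂ < x)
    (hl₁gap : ∃ ε > 0, Set.Ioo l₁ (l₁ + ε) ∩ C₁ = ∅)
    (hl₂gap : ∃ ε > 0, Set.Ioo l₂ (l₂ + ε) ∩ C₂ = ∅) :
    ∃ h : ℝ ≃ₜ ℝ, ⇑h '' C₁ = C₂ ∧ h l₁ = l₂ :=
  stmt6_general C₁ C₂ h₁c h₁p h₁t h₂c h₂p h₂t l₁ l₂ hl₁ hl₂ hl₁max hl₂max hl₁gap hl₂gap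
end

section
/- There exist orientation-preserving homeomorphisms f and g of [0,1] such that the standard middle-thirds Cantor set C satisfies f(C) = C and g(C) = C, and such that, for the group G generated by f and g, every point x ∈ C with x ≠ 0 and x ≠ 1 satisfies: the closure of the G-orbit of x equals C. -/
/-!
Code the points of the Cantor set by binary streams (ternary digit `2` ↦ `1`). The maps `f` and
`g` act on codes as the standard generators of Thompson's group `F` on Cantor space: `f` replaces
the prefixes `0`, `10`, `11` by `00`, `01`, `1`, and `g` fixes `0σ` and sends `1σ` to `1 f(σ)`.
These moves rewrite any finite word containing both letters into `10` without touching the tail.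
A point `x ≠ 0, 1` of the Cantor set has a code `wσ` with both letters occurring in `w`, so its
orbit contains the point coded by `u10σ` for every word `u`; these points are dense in the Cantor
set.
-/

open Set Topology Filter

/-- The standard middle-thirds Cantor set: points of `[0,1]` admitting a ternary expansion
using only the digits `0` and `2`. -/
def cantorC : Set ℝ :=
  {x | ∃ a : ℕ → ℕ, (∀ n, a n = 0 ∨ a n = 2) ∧ x = ∑' n, (a n : ℝ) / 3 ^ (n + 1)}

/-- The middle-thirds Cantor set as a subset of the unit interval. -/
def cantorI : Set unitInterval := {x | (x : ℝ) ∈ cantorC}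

open Real

noncomputable section

namespace CantorOrbit

lemma IntervalHomeo.map_zero (φ : IntervalHomeo) : φ 0 = 0 := φ.map_bot

lemma IntervalHomeo.map_one (φ : IntervalHomeo) : φ 1 = 1 := φ.map_top

def IntervalHomeo.ofMonotone (F Fi : ℝ → ℝ) (hF : Monotone F) (hFi : Monotone Fi)
    (hF0 : F 0 = 0) (hF1 : F 1 = 1)
    (hl : ∀ x ∈ unitInterval, Fi (F x) = x) (hr : ∀ x ∈ unitInterval, F (Fi x) = x) :
    IntervalHomeo :=
  have mem {H : ℝ → ℝ} (hH : Monotone H) (h0 : H 0 = 0) (h1 : H 1 = 1) (x : unitInterval) :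
      H x ∈ unitInterval := ⟨h0 ▸ hH x.2.1, h1 ▸ hH x.2.2⟩
  have hFi0 : Fi 0 = 0 := by simpa [hF0] using hl 0 unitInterval.zero_mem
  have hFi1 : Fi 1 = 1 := by simpa [hF1] using hl 1 unitInterval.one_mem
  Equiv.toOrderIso
    { toFun x := ⟨F x, mem hF hF0 hF1 x⟩
      invFun x := ⟨Fi x, mem hFi hFi0 hFi1 x⟩
      left_inv x := Subtype.ext (hl x x.2)
      right_inv x := Subtype.ext (hr x x.2) }
    (fun _ _ h => hF h) (fun _ _ h => hFi h)

/-- The three pieces contain the cylinders `0`, `20`, `22` of the Cantor set and map them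
affinely onto the cylinders `00`, `02`, `2`. -/
def fFun (x : ℝ) : ℝ := if x ≤ 2/3 then x / 3 else if x ≤ 7/9 then x - 4/9 else 3 * x - 2

def fInvFun (x : ℝ) : ℝ := if x ≤ 2/9 then 3 * x else if x ≤ 1/3 then x + 4/9 else (x + 2) / 3

lemma monotone_fFun : Monotone fFun := by
  intro x y h
  unfold fFun
  split_ifs <;> linarith

lemma monotone_fInvFun : Monotone fInvFun := by
  intro x y h
  unfold fInvFun
  split_ifs <;> linarith

lemma fInvFun_fFun (x : ℝ) : fInvFun (fFun x) = x := by
  unfold fFun fInvFun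
  split_ifs <;> linarith

lemma fFun_fInvFun (x : ℝ) : fFun (fInvFun x) = x := by
  unfold fFun fInvFun
  split_ifs <;> linarith

def fHomeo : IntervalHomeo :=
  IntervalHomeo.ofMonotone fFun fInvFun monotone_fFun monotone_fInvFun
    (by norm_num [fFun]) (by norm_num [fFun])
    (fun x _ => fInvFun_fFun x) (fun x _ => fFun_fInvFun x)

lemma coe_fHomeo_apply (x : unitInterval) : (fHomeo x : ℝ) = fFun x := rfl

def rightThirdCopy (φ : IntervalHomeo) (x : ℝ) : ℝ :=
  if x ≤ 2/3 then x else (2 + φ (projIcc 0 1 zero_le_one (3 * x - 2))) / 3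

lemma rightThirdCopy_of_le (φ : IntervalHomeo) {x : ℝ} (hx : x ≤ 2/3) :
    rightThirdCopy φ x = x :=
  if_pos hx

lemma rightThirdCopy_affine (φ : IntervalHomeo) (v : unitInterval) :
    rightThirdCopy φ ((2 + v) / 3) = (2 + φ v) / 3 := by
  unfold rightThirdCopy
  split_ifs with h
  · obtain rfl : v = 0 := Subtype.ext (le_antisymm (by rw [Icc.coe_zero]; linarith) v.2.1)
    rw [IntervalHomeo.map_zero]
  · rw [show 3 * ((2 + (v : ℝ)) / 3) - 2 = v by ring, projIcc_val]

lemma rightThirdCopy_one (φ : IntervalHomeo) : rightThirdCopy φ 1 = 1 := by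
  simpa [IntervalHomeo.map_one, show (2 + 1 : ℝ) / 3 = 1 by norm_num]
    using rightThirdCopy_affine φ 1

lemma monotone_rightThirdCopy (φ : IntervalHomeo) : Monotone (rightThirdCopy φ) := by
  intro x y h
  unfold rightThirdCopy
  split_ifs with hx hy hy
  · exact h
  · linarith [(φ (projIcc 0 1 zero_le_one (3 * y - 2))).2.1]
  · linarith
  · have := φ.monotone (monotone_projIcc zero_le_one (show 3 * x - 2 ≤ 3 * y - 2 by linarith))
    gcongr

lemma rightThirdCopy_symm_rightThirdCopy (φ : IntervalHomeo) {x : ℝ} (hx : x ∈ unitInterval) :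
    rightThirdCopy φ.symm (rightThirdCopy φ x) = x := by
  by_cases h : x ≤ 2/3
  · rw [rightThirdCopy_of_le φ h, rightThirdCopy_of_le _ h]
  · have hv : 3 * x - 2 ∈ unitInterval := ⟨by linarith, by linarith [hx.2]⟩
    obtain ⟨v, rfl⟩ : ∃ v : unitInterval, x = (2 + v) / 3 := ⟨⟨3 * x - 2, hv⟩, by simp⟩
    rw [rightThirdCopy_affine, rightThirdCopy_affine, φ.symm_apply_apply]

def gHomeo : IntervalHomeo :=
  IntervalHomeo.ofMonotone (rightThirdCopy fHomeo) (rightThirdCopy fHomeo.symm)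
    (monotone_rightThirdCopy _) (monotone_rightThirdCopy _)
    (rightThirdCopy_of_le _ (by norm_num)) (rightThirdCopy_one _)
    (fun _ hx => rightThirdCopy_symm_rightThirdCopy _ hx)
    (fun _ hx => by simpa using rightThirdCopy_symm_rightThirdCopy fHomeo.symm hx)

lemma coe_gHomeo_apply (x : unitInterval) : (gHomeo x : ℝ) = rightThirdCopy fHomeo x := rfl

/-! ### Coding the Cantor set by binary streams -/

def ternaryDigits (s : Stream' Bool) : ℕ → Fin 3 := fun i => cond (s.get i) 2 0

def cantorPt (s : Stream' Bool) : unitInterval :=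
  ⟨ofDigits (ternaryDigits s), ofDigits_nonneg _, ofDigits_le_one _⟩

lemma coe_cantorPt (s : Stream' Bool) : (cantorPt s : ℝ) = ofDigits (ternaryDigits s) := rfl

lemma coe_cantorPt_cons (b : Bool) (l : List Bool) (s : Stream' Bool) :
    (cantorPt ((b :: l) ++ₛ s) : ℝ) = (cond b 2 0 + cantorPt (l ++ₛ s)) / 3 := by
  have head : ofDigitsTerm (ternaryDigits ((b :: l) ++ₛ s)) 0 = cond b 2 0 / 3 := by
    cases b <;> norm_num [ofDigitsTerm, ternaryDigits]
  rw [coe_cantorPt, coe_cantorPt, ofDigits_eq_sum_add_ofDigits _ 1, Finset.sum_range_one, head]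
  change _ + _ * ofDigits (ternaryDigits (l ++ₛ s)) = _
  ring

lemma cantorPt_const_false : cantorPt (Stream'.const false) = 0 := by
  ext; simp [cantorPt, ternaryDigits, ofDigits, ofDigitsTerm]

lemma cantorPt_const_true : cantorPt (Stream'.const true) = 1 :=
  Subtype.ext (ofDigits_const_last_eq_one 2)

lemma dist_cantorPt_le {s t : Stream' Bool} {n : ℕ} (h : ∀ i < n, s.get i = t.get i) :
    dist (cantorPt s) (cantorPt t) ≤ (3 ^ n)⁻¹ := by
  rw [Subtype.dist_eq, Real.dist_eq]
  exact_mod_cast abs_ofDigits_sub_ofDigits_le fun i hi => congrArg (cond · 2 0) (h i hi)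

lemma coe_cantorPt_eq_tsum (s : Stream' Bool) :
    (cantorPt s : ℝ) = ∑' n, ((cond (s.get n) 2 0 : ℕ) : ℝ) / 3 ^ (n + 1) := by
  simp only [cantorPt, ofDigits, ofDigitsTerm, ternaryDigits, div_eq_mul_inv]
  congr! 2 with n
  cases s.get n <;> simp

lemma cantorC_eq_range : cantorC = range fun s => (cantorPt s : ℝ) := by
  ext x
  constructor
  · rintro ⟨a, ha, rfl⟩
    refine ⟨fun n => decide (a n = 2), (coe_cantorPt_eq_tsum _).trans ?_⟩
    congr! 2 with n
    rcases ha n with h | h <;> simp [Stream'.get, h]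
  · rintro ⟨s, rfl⟩
    exact ⟨fun n => cond (s.get n) 2 0, fun n => by cases h : s.get n <;> simp [h],
      coe_cantorPt_eq_tsum s⟩

lemma cantorSet_eq_range : cantorSet = range fun s => (cantorPt s : ℝ) := by
  refine Subset.antisymm (fun x hx => ⟨_, congrArg Subtype.val
    (cantorSetEquivNatToBool.symm_apply_apply ⟨x, hx⟩)⟩) ?_
  rintro _ ⟨s, rfl⟩
  exact ofDigits_bool_to_fin_three_mem_cantorSet s

lemma cantorI_eq_range : cantorI = range cantorPt := by
  ext x
  simp only [cantorI, mem_ofPred_eq, cantorC_eq_range, mem_range, Subtype.ext_iff]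

lemma isClosed_cantorI : IsClosed cantorI := by
  change IsClosed (Subtype.val ⁻¹' cantorC)
  rw [cantorC_eq_range, ← cantorSet_eq_range]
  exact isClosed_cantorSet.preimage continuous_subtype_val

section Orbit

variable {G : Subgroup IntervalHomeo} {x y z : unitInterval}

lemma mem_orbit_self (G : Subgroup IntervalHomeo) (x : unitInterval) : x ∈ orbit G x :=
  ⟨1, G.one_mem, rfl⟩

lemma mem_orbit_symm (h : y ∈ orbit G x) : x ∈ orbit G y := by
  obtain ⟨g, hg, rfl⟩ := h
  exact ⟨g⁻¹, G.inv_mem hg, g.symm_apply_apply x⟩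

lemma mem_orbit_trans (hxy : y ∈ orbit G x) (hyz : z ∈ orbit G y) : z ∈ orbit G x := by
  obtain ⟨g, hg, rfl⟩ := hxy
  obtain ⟨h, hh, rfl⟩ := hyz
  exact ⟨h * g, G.mul_mem hh hg, rfl⟩

lemma orbit_subset {M : Set unitInterval} (hM : Invariant G M) (hx : x ∈ M) : orbit G x ⊆ M := by
  rintro _ ⟨g, hg, rfl⟩
  rw [← hM g hg]
  exact mem_image_of_mem g hx

lemma invariant_closure {S : Set IntervalHomeo} {M : Set unitInterval}
    (hS : ∀ g ∈ S, ⇑g '' M = M) : Invariant (Subgroup.closure S) M := by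
  intro g hg
  induction hg using Subgroup.closure_induction with
  | mem g hg => exact hS g hg
  | one => exact image_id M
  | mul g h _ _ hg hh => rw [RelIso.coe_mul, image_comp, hh, hg]
  | inv g _ hg =>
    calc ⇑g⁻¹ '' M = ⇑g⁻¹ '' (⇑g '' M) := by rw [hg]
      _ = M := g.symm_image_image M

end Orbit

/-! ### The generators act on codes by prefix substitutions -/

lemma _root_.Stream'.exists_eq_pair_append (s : Stream' Bool) :
    ∃ b c τ, s = [b, c] ++ₛ τ :=
  ⟨s.get 0, s.get 1, s.drop 2, (Stream'.append_take_drop 2 s).symm⟩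

def fShift (s : Stream' Bool) : Stream' Bool :=
  match s.head, s.tail.head with
  | false, _ => [false] ++ₛ s
  | true, false => [false, true] ++ₛ s.drop 2
  | true, true => [true] ++ₛ s.drop 2

def gShift (s : Stream' Bool) : Stream' Bool :=
  match s.head with
  | false => s
  | true => [true] ++ₛ fShift s.tail

lemma fShift_false (l : List Bool) (σ : Stream' Bool) :
    fShift ((false :: l) ++ₛ σ) = (false :: false :: l) ++ₛ σ := rfl

lemma fShift_true_false (l : List Bool) (σ : Stream' Bool) :
    fShift ((true :: false :: l) ++ₛ σ) = (false :: true :: l) ++ₛ σ := rfl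

lemma fShift_true_true (l : List Bool) (σ : Stream' Bool) :
    fShift ((true :: true :: l) ++ₛ σ) = (true :: l) ++ₛ σ := rfl

lemma gShift_false (l : List Bool) (σ : Stream' Bool) :
    gShift ((false :: l) ++ₛ σ) = (false :: l) ++ₛ σ := rfl

lemma gShift_true (l : List Bool) (σ : Stream' Bool) :
    gShift ((true :: l) ++ₛ σ) = [true] ++ₛ fShift (l ++ₛ σ) := rfl

lemma fShift_surjective : Function.Surjective fShift := by
  intro t
  obtain ⟨b, c, τ, rfl⟩ := t.exists_eq_pair_append
  cases b
  · cases c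
    exacts [⟨[false] ++ₛ τ, rfl⟩, ⟨[true, false] ++ₛ τ, rfl⟩]
  · exact ⟨[true, true, c] ++ₛ τ, rfl⟩

lemma gShift_surjective : Function.Surjective gShift := by
  intro t
  obtain ⟨b, c, τ, rfl⟩ := t.exists_eq_pair_append
  cases b
  · exact ⟨[false, c] ++ₛ τ, rfl⟩
  · obtain ⟨σ, hσ⟩ := fShift_surjective ([c] ++ₛ τ)
    exact ⟨[true] ++ₛ σ, congrArg ([true] ++ₛ ·) hσ⟩

lemma fHomeo_cantorPt (s : Stream' Bool) : fHomeo (cantorPt s) = cantorPt (fShift s) := by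
  obtain ⟨b, c, τ, rfl⟩ := s.exists_eq_pair_append
  obtain ⟨h0, h1⟩ := (cantorPt τ).2
  ext
  cases b <;> cases c <;>
    simp only [coe_fHomeo_apply, fShift_false, fShift_true_false,
      fShift_true_true, coe_cantorPt_cons, Stream'.nil_append_stream, cond_false, cond_true,
      fFun] <;> split_ifs <;> linarith

lemma gHomeo_cantorPt (s : Stream' Bool) : gHomeo (cantorPt s) = cantorPt (gShift s) := by
  obtain ⟨b, c, τ, rfl⟩ := s.exists_eq_pair_append
  ext
  rw [coe_gHomeo_apply]
  cases b
  · have hle : (cantorPt ([false, c] ++ₛ τ) : ℝ) ≤ 2/3 := by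
      rw [coe_cantorPt_cons, cond_false]
      linarith [(cantorPt ([c] ++ₛ τ)).2.2]
    rw [gShift_false, rightThirdCopy_of_le _ hle]
  · rw [gShift_true, coe_cantorPt_cons true [c], coe_cantorPt_cons true [], cond_true,
      rightThirdCopy_affine, fHomeo_cantorPt, Stream'.nil_append_stream]

lemma image_cantorI_of_semiconj {h : IntervalHomeo} {σ : Stream' Bool → Stream' Bool}
    (hσ : Function.Surjective σ) (hh : ∀ s, h (cantorPt s) = cantorPt (σ s)) :
    ⇑h '' cantorI = cantorI := by
  rw [cantorI_eq_range, ← range_comp, show ⇑h ∘ cantorPt = cantorPt ∘ σ from funext hh,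
    hσ.range_comp]

lemma image_fHomeo_cantorI : ⇑fHomeo '' cantorI = cantorI :=
  image_cantorI_of_semiconj fShift_surjective fHomeo_cantorPt

lemma image_gHomeo_cantorI : ⇑gHomeo '' cantorI = cantorI :=
  image_cantorI_of_semiconj gShift_surjective gHomeo_cantorPt

/-! ### Transitivity on codes with the same tail -/

abbrev Γ : Subgroup IntervalHomeo := Subgroup.closure {fHomeo, gHomeo}

lemma invariant_cantorI : Invariant Γ cantorI :=
  invariant_closure <| by
    rintro g (rfl | rfl)
    exacts [image_fHomeo_cantorI, image_gHomeo_cantorI]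

def OrbitRel (s t : Stream' Bool) : Prop := cantorPt t ∈ orbit Γ (cantorPt s)

namespace OrbitRel

lemma refl (s : Stream' Bool) : OrbitRel s s := mem_orbit_self _ _

lemma symm {s t : Stream' Bool} (h : OrbitRel s t) : OrbitRel t s := mem_orbit_symm h

lemma trans {s t u : Stream' Bool} (h : OrbitRel s t) (h' : OrbitRel t u) : OrbitRel s u :=
  mem_orbit_trans h h'

lemma of_fShift (s : Stream' Bool) : OrbitRel s (fShift s) :=
  ⟨fHomeo, Subgroup.subset_closure (mem_insert _ _), fHomeo_cantorPt s⟩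

lemma of_gShift (s : Stream' Bool) : OrbitRel s (gShift s) :=
  ⟨gHomeo, Subgroup.subset_closure (mem_insert_of_mem _ rfl), gHomeo_cantorPt s⟩

lemma pair_self (x : Bool) (σ : Stream' Bool) : OrbitRel ([x, x] ++ₛ σ) ([x] ++ₛ σ) := by
  cases x
  exacts [(of_fShift ([false] ++ₛ σ)).symm, of_fShift ([true, true] ++ₛ σ)]

lemma false_true (σ : Stream' Bool) : OrbitRel ([false, true] ++ₛ σ) ([true, false] ++ₛ σ) :=
  (of_fShift ([true, false] ++ₛ σ)).symm

lemma true_false_cons (c : Bool) (σ : Stream' Bool) :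
    OrbitRel ([true, false, c] ++ₛ σ) ([true, false] ++ₛ σ) := by
  cases c
  · exact (of_gShift ([true, false] ++ₛ σ)).symm
  · exact (of_gShift ([true, true, false] ++ₛ σ)).symm.trans (pair_self true ([false] ++ₛ σ))

lemma true_false_append (w : List Bool) (σ : Stream' Bool) :
    OrbitRel ((true :: false :: w) ++ₛ σ) ([true, false] ++ₛ σ) := by
  induction w with
  | nil => exact refl _
  | cons c w ih => exact (true_false_cons c (w ++ₛ σ)).trans ih

lemma cons_append {x : Bool} {w : List Bool} (hw : (!x) ∈ w) (σ : Stream' Bool) :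
    OrbitRel ((x :: w) ++ₛ σ) ([true, false] ++ₛ σ) := by
  induction w with
  | nil => simp at hw
  | cons y w ih =>
    by_cases hyx : y = x
    · subst hyx
      exact (pair_self y (w ++ₛ σ)).trans (ih (by simpa using hw))
    · obtain rfl : y = !x := by cases x <;> cases y <;> simp_all
      cases x
      exacts [(false_true (w ++ₛ σ)).trans (true_false_append w σ), true_false_append w σ]

lemma append_of_mem {w : List Bool} (ht : true ∈ w) (hf : false ∈ w) (σ : Stream' Bool) :
    OrbitRel (w ++ₛ σ) ([true, false] ++ₛ σ) := by
  obtain _ | ⟨x, w⟩ := w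
  · simp at ht
  · exact cons_append (by cases x <;> simp_all) σ

end OrbitRel

/-! ### Density of orbits -/

lemma _root_.Stream'.exists_get_eq_of_ne_const {s : Stream' Bool} {b : Bool}
    (h : s ≠ Stream'.const (!b)) : ∃ i, s.get i = b := by
  by_contra! hs
  exact h (Stream'.ext fun i => Bool.eq_not.mpr (hs i))

lemma _root_.Stream'.mem_take_of_get_eq {s : Stream' Bool} {b : Bool} {i m : ℕ} (hi : i < m)
    (h : s.get i = b) : b ∈ s.take m :=
  List.mem_iff_getElem.mpr ⟨i, by rwa [Stream'.length_take], by rw [Stream'.take_get, h]⟩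

lemma cantorPt_mem_closure_orbit {s : Stream' Bool} {i j : ℕ} (hi : s.get i = true)
    (hj : s.get j = false) (t : Stream' Bool) : cantorPt t ∈ closure (orbit Γ (cantorPt s)) := by
  obtain ⟨m, him, hjm⟩ : ∃ m, i < m ∧ j < m := ⟨max i j + 1, by omega, by omega⟩
  have hs := OrbitRel.append_of_mem (s.mem_take_of_get_eq him hi) (s.mem_take_of_get_eq hjm hj)
    (s.drop m)
  rw [Stream'.append_take_drop] at hs
  generalize s.drop m = σ at hs
  rw [Metric.mem_closure_iff]
  intro ε hε
  obtain ⟨n, hn⟩ := exists_pow_lt_of_lt_one hε (show (3⁻¹ : ℝ) < 1 by norm_num)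
  have ht : OrbitRel (t.take n ++ₛ ([true, false] ++ₛ σ)) ([true, false] ++ₛ σ) := by
    simpa using OrbitRel.append_of_mem (w := t.take n ++ [true, false]) (by simp) (by simp) σ
  refine ⟨_, hs.trans ht.symm, ?_⟩
  calc dist (cantorPt t) _ ≤ (3 ^ n)⁻¹ := dist_cantorPt_le fun k hk => by
        rw [Stream'.get_append_left _ _ _ (by rwa [Stream'.length_take]), Stream'.take_get]
    _ < ε := by rwa [← inv_pow]

end CantorOrbit

end

open CantorOrbit in
/-- There are orientation-preserving homeomorphisms `f`, `g` of `[0,1]`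
preserving the middle-thirds Cantor set `C` such that, for the group they generate, every
`x ∈ C` other than `0` and `1` has orbit closure equal to `C`. -/
theorem stmt8 : ∃ f g : IntervalHomeo,
    ⇑f '' cantorI = cantorI ∧ ⇑g '' cantorI = cantorI ∧
    ∀ x : unitInterval, x ∈ cantorI → x ≠ 0 → x ≠ 1 →
      closure (orbit (Subgroup.closure {f, g}) x) = cantorI := by
  refine ⟨fHomeo, gHomeo, image_fHomeo_cantorI, image_gHomeo_cantorI, fun x hx hx0 hx1 => ?_⟩
  refine (closure_minimal (orbit_subset invariant_cantorI hx) isClosed_cantorI).antisymm ?_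
  obtain ⟨s, rfl⟩ : x ∈ range cantorPt := cantorI_eq_range ▸ hx
  obtain ⟨i, hi⟩ := s.exists_get_eq_of_ne_const (b := true) <| by
    rintro rfl
    exact hx0 cantorPt_const_false
  obtain ⟨j, hj⟩ := s.exists_get_eq_of_ne_const (b := false) <| by
    rintro rfl
    exact hx1 cantorPt_const_true
  rw [cantorI_eq_range]
  rintro _ ⟨t, rfl⟩
  exact cantorPt_mem_closure_orbit hi hj t
end

section
/- There exist orientation-preserving homeomorphisms f and g of [0,1] with f ∘ g = g ∘ f, and points z, x ∈ (0,1), such that for the group G generated by f and g: (i) the G-orbit of z equals {gⁿ(z) : n ∈ ℤ} and its set of accumulation points is exactly {0, 1}; (ii) the G-orbit of x is disjoint from the G-orbit of z and its set of accumulation points is exactly O(z) ∪ {0, 1}, the closure of the G-orbit of z. -/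
/-!
`[0,1]` is order isomorphic to `EReal`, so every order automorphism of `ℝ` extends to one of
`[0,1]`, and `ℝ` sits openly in `(0,1)`: accumulation points inside `(0,1)` can be computed in `ℝ`.
On `ℝ` take `g` the translation by `1` and `f t = ⌊t⌋ + fract(t)²`, which commute since `f`
commutes with integer translations. The orbit of `z = 0` is `ℤ`. Since `f` is squaring on `(0,1)`,
the orbit of `x = exp(-1)` is `{exp(-2^m) + n | m n : ℤ}`; in each `(n, n+1)` it is a sequence
tending to `n` as `m → ∞` and to `n+1` as `m → -∞`, so its accumulation points in `ℝ` are exactly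
the integers. Both orbits are unbounded in both directions, hence also accumulate at `0` and `1`.
-/

open Set Topology Filter

lemma Topology.IsOpenEmbedding.accPt_image_iff {X Y : Type*} [TopologicalSpace X]
    [TopologicalSpace Y] {f : X → Y} (hf : IsOpenEmbedding f) {x : X} {s : Set X} :
    AccPt (f x) (𝓟 (f '' s)) ↔ AccPt x (𝓟 s) := by
  refine ⟨fun h => ?_, fun h => by simpa using h.map hf.continuous.continuousAt hf.injective⟩
  simpa [hf.injective.preimage_image] using hf.isOpenMap.accPt_comap h

lemma not_accPt_range_of_finite_preimage {ι X : Type*} [TopologicalSpace X] [T1Space X]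
    {u : ι → X} {x : X} {U : Set X} (hU : U ∈ 𝓝 x) (hfin : (u ⁻¹' U).Finite) :
    ¬AccPt x (𝓟 (range u)) := fun h =>
  Set.Infinite.of_accPt (h.nhds_inter hU) <| by
    rw [← image_preimage_eq_inter_range]; exact hfin.image u

lemma derivedSet_range_subset_of_tendsto {X : Type*} [TopologicalSpace X] [T2Space X]
    {u : ℤ → X} {a b : X} (ha : Tendsto u atBot (𝓝 a)) (hb : Tendsto u atTop (𝓝 b)) :
    derivedSet (range u) ⊆ {a, b} := by
  intro x hx
  by_contra hne
  simp only [mem_insert_iff, mem_singleton_iff, not_or] at hne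
  obtain ⟨U, hU, V, hV, hUV⟩ := Filter.disjoint_iff.1 <| disjoint_sup_right.2
    ⟨disjoint_nhds_nhds.2 hne.1, disjoint_nhds_nhds.2 hne.2⟩
  have hV' : u ⁻¹' V ∈ cofinite := Int.cofinite_eq ▸ ha.sup_sup hb hV
  exact not_accPt_range_of_finite_preimage hU
    ((mem_cofinite.1 hV').subset fun i hi hiV => disjoint_left.1 hUV hi hiV) hx

lemma zpow_smul_of_smul_eq {G α : Type*} [Group G] [MulAction G α] {g : G} {u : ℤ → α}
    (hu : ∀ k, g • u k = u (k + 1)) (m k : ℤ) : g ^ m • u k = u (k + m) := by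
  induction m using Int.induction_on generalizing k with
  | zero => simp
  | succ n ih => rw [zpow_add_one, mul_smul, hu, ih, add_assoc, add_comm 1]
  | pred n ih =>
    rw [zpow_sub_one, mul_smul, inv_smul_eq_iff.2 (by rw [hu, sub_add_cancel]), ih,
      add_sub_assoc', sub_add_eq_add_sub]

lemma image_range_of_comp_eq {α β : Type*} {f : β → β} {v : α → β} {σ : α → α}
    (hσ : Function.Surjective σ) (h : f ∘ v = v ∘ σ) : f '' range v = range v := by
  rw [← range_comp, h, hσ.range_comp]

open scoped Pointwise in
lemma invariant_closure {s : Set IntervalHomeo} {M : Set unitInterval}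
    (hM : ∀ h ∈ s, ⇑h '' M = M) : Invariant (Subgroup.closure s) M := by
  have : Subgroup.closure s ≤ MulAction.stabilizer IntervalHomeo M :=
    (Subgroup.closure_le _).2 fun h hs => by
      rw [SetLike.mem_coe, MulAction.mem_stabilizer_iff, ← Set.image_smul]; exact hM h hs
  intro h hh
  have := MulAction.mem_stabilizer_iff.1 (this hh)
  rwa [← Set.image_smul] at this

lemma Invariant.orbit_subset {G : Subgroup IntervalHomeo} {M : Set unitInterval}
    (hM : Invariant G M) {z : unitInterval} (hz : z ∈ M) : orbit G z ⊆ M := by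
  rintro _ ⟨h, hh, rfl⟩
  exact hM h hh ▸ mem_image_of_mem h hz

noncomputable def erealOrderIsoUnitInterval : EReal ≃o unitInterval :=
  ENNReal.logOrderIso.symm.trans ENNReal.orderIsoUnitIntervalBirational

noncomputable def toUnitInterval (t : ℝ) : unitInterval := erealOrderIsoUnitInterval t

def OrderIso.erealCongr (φ : ℝ ≃o ℝ) : EReal ≃o EReal := φ.withTopCongr.withBotCongr

@[simp] lemma OrderIso.erealCongr_coe (φ : ℝ ≃o ℝ) (t : ℝ) : φ.erealCongr t = φ t := rfl
@[simp] lemma OrderIso.erealCongr_bot (φ : ℝ ≃o ℝ) : φ.erealCongr ⊥ = ⊥ := rfl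
@[simp] lemma OrderIso.erealCongr_top (φ : ℝ ≃o ℝ) : φ.erealCongr ⊤ = ⊤ := rfl

noncomputable def intervalHomeoOfReal : (ℝ ≃o ℝ) →* IntervalHomeo where
  toFun φ := erealOrderIsoUnitInterval.symm.trans (φ.erealCongr.trans erealOrderIsoUnitInterval)
  map_one' := OrderIso.ext <| funext fun p => by
    obtain ⟨q, rfl⟩ := erealOrderIsoUnitInterval.surjective p
    induction q using EReal.rec <;> simp
  map_mul' φ ψ := OrderIso.ext <| funext fun p => by
    obtain ⟨q, rfl⟩ := erealOrderIsoUnitInterval.surjective p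
    induction q using EReal.rec <;> simp

lemma intervalHomeoOfReal_toUnitInterval (φ : ℝ ≃o ℝ) (t : ℝ) :
    intervalHomeoOfReal φ (toUnitInterval t) = toUnitInterval (φ t) := by
  simp [intervalHomeoOfReal, toUnitInterval]

lemma erealOrderIsoUnitInterval_bot : erealOrderIsoUnitInterval ⊥ = 0 :=
  erealOrderIsoUnitInterval.map_bot

lemma erealOrderIsoUnitInterval_top : erealOrderIsoUnitInterval ⊤ = 1 :=
  erealOrderIsoUnitInterval.map_top

lemma toUnitInterval_injective : Function.Injective toUnitInterval :=
  erealOrderIsoUnitInterval.injective.comp EReal.coe_injective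

lemma toUnitInterval_ne_zero (t : ℝ) : toUnitInterval t ≠ 0 := by
  rw [← erealOrderIsoUnitInterval_bot, toUnitInterval, Ne,
    erealOrderIsoUnitInterval.apply_eq_iff_eq]
  exact EReal.coe_ne_bot t

lemma toUnitInterval_ne_one (t : ℝ) : toUnitInterval t ≠ 1 := by
  rw [← erealOrderIsoUnitInterval_top, toUnitInterval, Ne,
    erealOrderIsoUnitInterval.apply_eq_iff_eq]
  exact EReal.coe_ne_top t

lemma toUnitInterval_mem_openI (t : ℝ) : toUnitInterval t ∈ openI :=
  ⟨unitInterval.pos_iff_ne_zero.2 (toUnitInterval_ne_zero t),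
    unitInterval.lt_one_iff_ne_one.2 (toUnitInterval_ne_one t)⟩

lemma isOpenEmbedding_toUnitInterval : IsOpenEmbedding toUnitInterval :=
  erealOrderIsoUnitInterval.toHomeomorph.isOpenEmbedding.comp EReal.isOpenEmbedding_coe

lemma tendsto_toUnitInterval_atTop : Tendsto toUnitInterval atTop (𝓝 1) := by
  rw [← erealOrderIsoUnitInterval_top]
  exact (erealOrderIsoUnitInterval.continuous.tendsto ⊤).comp EReal.tendsto_coe_atTop

lemma tendsto_toUnitInterval_atBot : Tendsto toUnitInterval atBot (𝓝 0) := by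
  rw [← erealOrderIsoUnitInterval_bot]
  exact (erealOrderIsoUnitInterval.continuous.tendsto ⊥).comp EReal.tendsto_coe_atBot

lemma derivedSet_image_toUnitInterval {R : Set ℝ} (hA : ¬BddAbove R) (hB : ¬BddBelow R) :
    derivedSet (toUnitInterval '' R) = toUnitInterval '' derivedSet R ∪ {0, 1} := by
  ext p
  obtain ⟨q, rfl⟩ := erealOrderIsoUnitInterval.surjective p
  induction q using EReal.rec with
  | bot =>
    rw [erealOrderIsoUnitInterval_bot]
    refine iff_of_true (accPt_iff_frequently.2 <| tendsto_toUnitInterval_atBot.frequently ?_)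
      (by simp)
    rw [not_bddBelow_iff] at hB
    exact frequently_atBot'.2 fun a => (hB a).imp fun t ⟨ht, hta⟩ =>
      ⟨hta, toUnitInterval_ne_zero t, mem_image_of_mem _ ht⟩
  | top =>
    rw [erealOrderIsoUnitInterval_top]
    refine iff_of_true (accPt_iff_frequently.2 <| tendsto_toUnitInterval_atTop.frequently ?_)
      (by simp)
    rw [not_bddAbove_iff] at hA
    exact frequently_atTop'.2 fun a => (hA a).imp fun t ⟨ht, hta⟩ =>
      ⟨hta, toUnitInterval_ne_one t, mem_image_of_mem _ ht⟩
  | coe t =>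
    change toUnitInterval t ∈ _ ↔ toUnitInterval t ∈ _
    simp [isOpenEmbedding_toUnitInterval.accPt_image_iff, toUnitInterval_injective.mem_set_image,
      toUnitInterval_ne_zero, toUnitInterval_ne_one]

lemma floor_add_fract_sq_strictMono :
    StrictMono fun t : ℝ => (⌊t⌋ : ℝ) + Int.fract t ^ 2 := by
  intro a b hab
  rcases lt_or_ge ⌊a⌋ ⌊b⌋ with h | h
  · have h1 : (⌊a⌋ : ℝ) + 1 ≤ ⌊b⌋ := by exact_mod_cast h
    nlinarith [Int.fract_nonneg a, Int.fract_lt_one a, Int.fract_nonneg b]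
  · have hfl : ⌊a⌋ = ⌊b⌋ := le_antisymm (Int.floor_le_floor hab.le) h
    have hf : Int.fract a < Int.fract b := by
      rw [Int.fract, Int.fract, hfl]; linarith
    simp only [hfl]
    nlinarith [Int.fract_nonneg a]

lemma floor_add_fract_sq_surjective :
    Function.Surjective fun t : ℝ => (⌊t⌋ : ℝ) + Int.fract t ^ 2 := by
  intro s
  have hsqrt : √(Int.fract s) ∈ Ico (0 : ℝ) 1 :=
    ⟨Real.sqrt_nonneg _, (Real.sqrt_lt' one_pos).2 (by simpa using Int.fract_lt_one s)⟩
  refine ⟨⌊s⌋ + √(Int.fract s), ?_⟩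
  simp [Int.floor_eq_zero_iff.2 hsqrt, Int.fract_eq_self.2 hsqrt,
    Real.sq_sqrt (Int.fract_nonneg s)]

noncomputable def fractSq : ℝ ≃o ℝ :=
  StrictMono.orderIsoOfSurjective _ floor_add_fract_sq_strictMono floor_add_fract_sq_surjective

lemma fractSq_apply (t : ℝ) : fractSq t = ⌊t⌋ + Int.fract t ^ 2 := rfl

lemma fractSq_add_intCast (t : ℝ) (n : ℤ) : fractSq (t + n) = fractSq t + n := by
  simp only [fractSq_apply, Int.floor_add_intCast, Int.fract_add_intCast]
  push_cast; ring


noncomputable def squaringSeq (m : ℤ) : ℝ := Real.exp (-(2 : ℝ) ^ m)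

lemma squaringSeq_mem_Ioo (m : ℤ) : squaringSeq m ∈ Ioo (0 : ℝ) 1 :=
  ⟨Real.exp_pos _, Real.exp_lt_one_iff.2 (neg_neg_of_pos (zpow_pos two_pos m))⟩

lemma squaringSeq_add_one (m : ℤ) : squaringSeq (m + 1) = squaringSeq m ^ 2 := by
  rw [squaringSeq, squaringSeq, ← Real.exp_nat_mul, zpow_add_one₀ two_ne_zero]
  push_cast; ring_nf

lemma tendsto_two_zpow_atTop : Tendsto (fun m : ℤ => (2 : ℝ) ^ m) atTop atTop := by
  simpa [Function.comp_def, Real.rpow_intCast] using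
    (tendsto_rpow_atTop_of_base_gt_one 2 one_lt_two).comp tendsto_intCast_atTop_atTop

lemma tendsto_two_zpow_atBot : Tendsto (fun m : ℤ => (2 : ℝ) ^ m) atBot (𝓝 0) := by
  simpa [Function.comp_def, Real.rpow_intCast] using
    (tendsto_rpow_atBot_of_base_gt_one 2 one_lt_two).comp
      (tendsto_intCast_atBot_iff.2 tendsto_id)

lemma tendsto_squaringSeq_atTop : Tendsto squaringSeq atTop (𝓝 0) :=
  Real.tendsto_exp_atBot.comp (tendsto_neg_atTop_atBot.comp tendsto_two_zpow_atTop)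

lemma tendsto_squaringSeq_atBot : Tendsto squaringSeq atBot (𝓝 1) :=
  (Real.continuous_exp.tendsto' 0 1 Real.exp_zero).comp <| by
    simpa using tendsto_two_zpow_atBot.neg

lemma derivedSet_range_intCast : derivedSet (range ((↑) : ℤ → ℝ)) = ∅ := by
  refine eq_empty_of_forall_notMem fun t => not_accPt_range_of_finite_preimage
    (Metric.closedBall_mem_nhds t one_pos) ?_
  simpa using mem_cofinite.1 <|
    Int.tendsto_coe_cofinite (isCompact_closedBall t 1).compl_mem_cocompact

def squaringSeqTranslates : Set ℝ := range fun p : ℤ × ℤ => squaringSeq p.1 + p.2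

lemma floor_squaringSeq_add_intCast (m n : ℤ) : ⌊squaringSeq m + n⌋ = n := by
  rw [Int.floor_add_intCast, Int.floor_eq_zero_iff.2 (Ioo_subset_Ico_self (squaringSeq_mem_Ioo m)),
    zero_add]

lemma fract_squaringSeq_add_intCast (m n : ℤ) :
    Int.fract (squaringSeq m + n) = squaringSeq m := by
  rw [Int.fract_add_intCast, Int.fract_eq_self.2 (Ioo_subset_Ico_self (squaringSeq_mem_Ioo m))]

lemma fractSq_squaringSeq_add_intCast (m n : ℤ) :
    fractSq (squaringSeq m + n) = squaringSeq (m + 1) + n := by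
  rw [fractSq_apply, floor_squaringSeq_add_intCast, fract_squaringSeq_add_intCast,
    squaringSeq_add_one, add_comm]

lemma squaringSeq_add_intCast_ne_intCast (m n k : ℤ) : squaringSeq m + n ≠ k := fun h => by
  have := congrArg Int.fract h
  rw [fract_squaringSeq_add_intCast, Int.fract_intCast] at this
  exact (squaringSeq_mem_Ioo m).1.ne' this

lemma derivedSet_squaringSeqTranslates :
    derivedSet squaringSeqTranslates = range ((↑) : ℤ → ℝ) := by
  refine Subset.antisymm (fun t ht => ?_) ?_
  · by_contra hnt
    set k := ⌊t⌋
    have htk : t ∈ Ioo (k : ℝ) (k + 1) :=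
      ⟨(Int.floor_le t).lt_of_ne fun h => hnt ⟨k, h⟩, Int.lt_floor_add_one t⟩
    have hloc :
        Ioo (k : ℝ) (k + 1) ∩ squaringSeqTranslates ⊆ range fun m => squaringSeq m + k := by
      rintro _ ⟨hk, ⟨m, n⟩, rfl⟩
      have : n = k := by
        rw [← floor_squaringSeq_add_intCast m n, Int.floor_eq_iff]; exact ⟨hk.1.le, hk.2⟩
      exact ⟨m, by simp [this]⟩
    have hacc := (ht.nhds_inter (isOpen_Ioo.mem_nhds htk)).mono (principal_mono.2 hloc)
    have := derivedSet_range_subset_of_tendsto (tendsto_squaringSeq_atBot.add_const (k : ℝ))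
      (tendsto_squaringSeq_atTop.add_const (k : ℝ)) hacc
    simp only [mem_insert_iff, mem_singleton_iff] at this
    rcases this with h | h <;> linarith [htk.1, htk.2]
  · rintro _ ⟨k, rfl⟩
    refine accPt_iff_frequently.2 <| Tendsto.frequently (f := fun m => squaringSeq m + k)
      (by simpa using tendsto_squaringSeq_atTop.add_const (k : ℝ)) (Eventually.frequently ?_)
    exact .of_forall fun m => ⟨squaringSeq_add_intCast_ne_intCast m k k, (m, k), rfl⟩

lemma range_squaringSeq_zero_add_subset :
    (range fun n : ℤ => squaringSeq 0 + n) ⊆ squaringSeqTranslates :=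
  range_subset_iff.2 fun n => ⟨(0, n), rfl⟩

lemma not_bddAbove_squaringSeqTranslates : ¬BddAbove squaringSeqTranslates := fun h =>
  not_bddAbove_of_tendsto_atTop (tendsto_atTop_add_const_left _ _ tendsto_intCast_atTop_atTop)
    (h.mono range_squaringSeq_zero_add_subset)

lemma not_bddBelow_squaringSeqTranslates : ¬BddBelow squaringSeqTranslates := fun h =>
  not_bddBelow_of_tendsto_atBot
    (tendsto_atBot_add_const_left _ _ (tendsto_intCast_atBot_iff.2 tendsto_id))
    (h.mono range_squaringSeq_zero_add_subset)

lemma intervalHomeoOfReal_image_toUnitInterval (φ : ℝ ≃o ℝ) (R : Set ℝ) :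
    intervalHomeoOfReal φ '' (toUnitInterval '' R) = toUnitInterval '' (φ '' R) := by
  simp only [image_image, intervalHomeoOfReal_toUnitInterval]

noncomputable def fractSqHomeo : IntervalHomeo := intervalHomeoOfReal fractSq

noncomputable def shiftHomeo : IntervalHomeo := intervalHomeoOfReal (OrderIso.addRight 1)

lemma fractSqHomeo_mul_shiftHomeo : fractSqHomeo * shiftHomeo = shiftHomeo * fractSqHomeo := by
  rw [fractSqHomeo, shiftHomeo, ← map_mul, ← map_mul]
  congr 1
  ext t
  exact_mod_cast fractSq_add_intCast t 1

lemma fractSqHomeo_toUnitInterval (t : ℝ) :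
    fractSqHomeo (toUnitInterval t) = toUnitInterval (fractSq t) :=
  intervalHomeoOfReal_toUnitInterval _ t

lemma shiftHomeo_toUnitInterval (t : ℝ) :
    shiftHomeo (toUnitInterval t) = toUnitInterval (t + 1) :=
  intervalHomeoOfReal_toUnitInterval _ t

lemma invariant_image_toUnitInterval_range {ι : Type*} {v : ι → ℝ} {σ τ : ι → ι}
    (hσ : Function.Surjective σ) (hτ : Function.Surjective τ) (hf : fractSq ∘ v = v ∘ σ)
    (hg : (· + 1) ∘ v = v ∘ τ) :
    Invariant (Subgroup.closure {fractSqHomeo, shiftHomeo}) (toUnitInterval '' range v) := by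
  refine invariant_closure ?_
  rintro _ (rfl | rfl)
  · exact (intervalHomeoOfReal_image_toUnitInterval _ _).trans
      (congrArg _ (image_range_of_comp_eq hσ hf))
  · exact (intervalHomeoOfReal_image_toUnitInterval _ _).trans
      (congrArg _ (image_range_of_comp_eq hτ hg))

lemma range_shiftHomeo_zpow :
    (range fun n : ℤ => (shiftHomeo ^ n) (toUnitInterval 0)) =
      toUnitInterval '' range ((↑) : ℤ → ℝ) := by
  have h (n : ℤ) : (shiftHomeo ^ n) (toUnitInterval 0) = toUnitInterval n := by
    simpa using zpow_smul_of_smul_eq (g := shiftHomeo) (u := fun k : ℤ => toUnitInterval k)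
      (fun k => by simp [shiftHomeo_toUnitInterval]) n 0
  rw [← range_comp]
  simp only [h]
  rfl

lemma orbit_toUnitInterval_zero :
    orbit (Subgroup.closure {fractSqHomeo, shiftHomeo}) (toUnitInterval 0) =
      toUnitInterval '' range ((↑) : ℤ → ℝ) := by
  refine Subset.antisymm ((invariant_image_toUnitInterval_range (σ := id) (τ := (· + 1))
    Function.surjective_id (add_right_surjective (1 : ℤ)) ?_ ?_).orbit_subset
      ⟨0, ⟨0, Int.cast_zero⟩, rfl⟩) ?_
  · funext n; simp [fractSq_apply]
  · funext n; simp
  · rw [← range_shiftHomeo_zpow]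
    rintro _ ⟨n, rfl⟩
    exact ⟨_, zpow_mem (Subgroup.subset_closure (by simp)) n, rfl⟩

lemma orbit_toUnitInterval_squaringSeq_zero :
    orbit (Subgroup.closure {fractSqHomeo, shiftHomeo}) (toUnitInterval (squaringSeq 0)) =
      toUnitInterval '' squaringSeqTranslates := by
  refine Subset.antisymm ((invariant_image_toUnitInterval_range
    ((add_right_surjective (1 : ℤ)).prodMap Function.surjective_id)
    (Function.surjective_id.prodMap (add_right_surjective (1 : ℤ))) ?_ ?_).orbit_subset
      (mem_image_of_mem _ ⟨((0 : ℤ), (0 : ℤ)), by simp⟩)) ?_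
  · funext ⟨m, n⟩
    exact fractSq_squaringSeq_add_intCast m n
  · funext ⟨m, n⟩
    simp [add_assoc]
  · rintro _ ⟨_, ⟨⟨m, n⟩, rfl⟩, rfl⟩
    refine ⟨fractSqHomeo ^ m * shiftHomeo ^ n,
      mul_mem (zpow_mem (Subgroup.subset_closure (by simp)) m)
        (zpow_mem (Subgroup.subset_closure (by simp)) n), ?_⟩
    have hg : (shiftHomeo ^ n) (toUnitInterval (squaringSeq 0)) =
        toUnitInterval (squaringSeq 0 + n) := by
      simpa using zpow_smul_of_smul_eq (g := shiftHomeo)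
        (u := fun k : ℤ => toUnitInterval (squaringSeq 0 + k))
        (fun k => by simp [shiftHomeo_toUnitInterval, add_assoc]) n 0
    have hf : (fractSqHomeo ^ m) (toUnitInterval (squaringSeq 0 + n)) =
        toUnitInterval (squaringSeq m + n) := by
      simpa using zpow_smul_of_smul_eq (g := fractSqHomeo)
        (u := fun k : ℤ => toUnitInterval (squaringSeq k + n))
        (fun k => by simp [fractSqHomeo_toUnitInterval, fractSq_squaringSeq_add_intCast]) m 0
    simp [hg, hf]

/-- There are commuting orientation-preserving homeomorphisms `f`, `g` of
`[0,1]` and points `z, x ∈ (0,1)` such that, for the group `G` generated by `f` and `g`: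
(i) the orbit of `z` is `{gⁿ(z) : n ∈ ℤ}` and its accumulation set is exactly `{0,1}`;
(ii) the orbit of `x` is disjoint from that of `z` and its accumulation set is exactly
`O(z) ∪ {0,1}`. -/
theorem stmt9 : ∃ f g : IntervalHomeo, f * g = g * f ∧ ∃ z x : unitInterval,
    z ∈ openI ∧ x ∈ openI ∧
    ∀ G : Subgroup IntervalHomeo, G = Subgroup.closure {f, g} →
      orbit G z = {y | ∃ n : ℤ, (g ^ n) z = y} ∧
      {p | AccPt p (𝓟 (orbit G z))} = {0, 1} ∧
      Disjoint (orbit G x) (orbit G z) ∧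
      {p | AccPt p (𝓟 (orbit G x))} = orbit G z ∪ {0, 1} := by
  refine ⟨fractSqHomeo, shiftHomeo, fractSqHomeo_mul_shiftHomeo, toUnitInterval 0,
    toUnitInterval (squaringSeq 0), toUnitInterval_mem_openI 0, toUnitInterval_mem_openI _, ?_⟩
  rintro _ rfl
  rw [orbit_toUnitInterval_zero, orbit_toUnitInterval_squaringSeq_zero]
  refine ⟨range_shiftHomeo_zpow.symm, ?_, ?_, ?_⟩
  · change derivedSet _ = _
    rw [derivedSet_image_toUnitInterval (not_bddAbove_of_tendsto_atTop tendsto_intCast_atTop_atTop)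
      (not_bddBelow_of_tendsto_atBot (tendsto_intCast_atBot_iff.2 tendsto_id)),
      derivedSet_range_intCast, image_empty, empty_union]
  · rw [disjoint_image_iff toUnitInterval_injective, disjoint_left]
    rintro _ ⟨⟨m, n⟩, rfl⟩ ⟨k, hk⟩
    exact squaringSeq_add_intCast_ne_intCast m n k hk.symm
  · change derivedSet _ = _
    rw [derivedSet_image_toUnitInterval not_bddAbove_squaringSeqTranslates
      not_bddBelow_squaringSeqTranslates, derivedSet_squaringSeqTranslates]
end

section
/- There exist orientation-preserving homeomorphisms f and g of [0,1] and points z, x ∈ (0,1) such that, for the group G generated by f and g: the set of accumulation points of the G-orbit of z is exactly {0, 1}, and the G-orbit of x is dense in [0,1]. -/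
open Set Topology Filter

/-! Identify `(0, 1)` with `ℝ` through the logistic chart `[-∞, ∞] ≃o [0, 1]`, so that every
order automorphism of `ℝ` extends to `[0, 1]`. On `ℝ` take `f = (· + 1)` and let `g` act on the
cell `(n, n + 1)`, written in the coordinate `s ↦ n + sigmoid s`, as the translation of `s` by `1`
if `n = 0`, by `√2` if `n = 1`, and trivially otherwise. Both preserve `ℤ`, so the orbit of `0`
is `ℤ`, whose only accumulation points in `[-∞, ∞]` are `±∞`. On the orbit of the point of the
cell `(0, 1)` with coordinate `0`, the elements `g` and `f⁻¹ g f` shift the coordinate by `1` and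
by `√2`, so the coordinates reached contain the dense group `ℤ + √2 ℤ`; powers of `f` carry
this to every cell. -/

open Real
open scoped Pointwise

namespace OrderIso

variable {α β : Type*} [LinearOrder α] [PartialOrder β]

theorem strictMono_extend_comp (φ : β ↪o α) (hφ : (range φ).OrdConnected) (e : β ≃o β) :
    StrictMono (Function.extend φ (φ ∘ e) id) := by
  intro x y hxy
  by_cases hx : x ∈ range φ <;> by_cases hy : y ∈ range φ
  · obtain ⟨a, rfl⟩ := hx
    obtain ⟨b, rfl⟩ := hy
    simp only [φ.injective.extend_apply, Function.comp_apply]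
    exact φ.strictMono (e.strictMono (φ.lt_iff_lt.mp hxy))
  · obtain ⟨a, rfl⟩ := hx
    rw [φ.injective.extend_apply, Function.extend_apply' _ _ _ hy]
    exact lt_of_not_ge fun hle =>
      hy (hφ.out (mem_range_self a) (mem_range_self (e a)) ⟨hxy.le, hle⟩)
  · obtain ⟨b, rfl⟩ := hy
    rw [φ.injective.extend_apply, Function.extend_apply' _ _ _ hx]
    exact lt_of_not_ge fun hle =>
      hx (hφ.out (mem_range_self (e b)) (mem_range_self b) ⟨hle, hxy.le⟩)
  · rwa [Function.extend_apply' _ _ _ hx, Function.extend_apply' _ _ _ hy]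

theorem extend_comp_symm_extend_comp (φ : β ↪o α) (e : β ≃o β) (x : α) :
    Function.extend φ (φ ∘ e.symm) id (Function.extend φ (φ ∘ e) id x) = x := by
  by_cases hx : x ∈ range φ
  · obtain ⟨a, rfl⟩ := hx
    simp only [φ.injective.extend_apply, Function.comp_apply, symm_apply_apply]
  · rw [Function.extend_apply' _ _ _ hx, id, Function.extend_apply' _ _ _ hx, id]

noncomputable def extendAlong (φ : β ↪o α) (hφ : (range φ).OrdConnected) (e : β ≃o β) :
    α ≃o α where
  toFun := Function.extend φ (φ ∘ e) id
  invFun := Function.extend φ (φ ∘ e.symm) id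
  left_inv := extend_comp_symm_extend_comp φ e
  right_inv x := by simpa using extend_comp_symm_extend_comp φ e.symm x
  map_rel_iff' := (strictMono_extend_comp φ hφ e).le_iff_le

variable (φ : β ↪o α) (hφ : (range φ).OrdConnected) (e : β ≃o β)

theorem extendAlong_apply_self (b : β) : extendAlong φ hφ e (φ b) = φ (e b) :=
  φ.injective.extend_apply _ _ _

theorem extendAlong_apply_of_notMem {x : α} (hx : x ∉ range φ) : extendAlong φ hφ e x = x :=
  Function.extend_apply' _ _ _ hx

theorem apply_mem_orbit_iff {γ : Type*} [Preorder γ] {H : Subgroup (γ ≃o γ)} {h : γ ≃o γ}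
    (hh : h ∈ H) {a b : γ} : h b ∈ MulAction.orbit H a ↔ b ∈ MulAction.orbit H a := by
  rw [← MulAction.orbit_eq_iff, ← MulAction.orbit_eq_iff]
  exact iff_of_eq (congrArg (· = _) (MulAction.orbit_smul (⟨h, hh⟩ : H) b))

end OrderIso

theorem Homeomorph.setOf_accPt_image {X Y : Type*} [TopologicalSpace X] [TopologicalSpace Y]
    (e : X ≃ₜ Y) (s : Set X) : {y | AccPt y (𝓟 (e '' s))} = e '' {x | AccPt x (𝓟 s)} := by
  ext y
  obtain ⟨x, rfl⟩ := e.surjective y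
  rw [mem_ofPred_eq, e.injective.mem_set_image, mem_ofPred_eq,
    ← e.isOpenEmbedding.accPt_comap_iff, comap_principal, e.preimage_image]

theorem Real.not_accPt_range_intCast (t : ℝ) : ¬AccPt t (𝓟 (range ((↑) : ℤ → ℝ))) := by
  have hclosed := Int.isClosedEmbedding_coe_real.isClosed_range
  have hdiscrete := Int.isClosedEmbedding_coe_real.isInducing.isDiscrete_range
  exact fun h => h.ne (disjoint_iff.mp (isClosed_and_discrete_iff.mp ⟨hclosed, hdiscrete⟩ t))

namespace EReal

theorem denseRange_coe : DenseRange ((↑) : ℝ → EReal) :=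
  dense_of_exists_between fun _ _ hab =>
    let ⟨x, hx⟩ := lt_iff_exists_real_btwn.mp hab
    ⟨x, mem_range_self x, hx⟩

theorem accPt_top_image_range_intCast :
    AccPt (⊤ : EReal) (𝓟 (Real.toEReal '' range ((↑) : ℤ → ℝ))) := by
  have : Tendsto (fun n : ℕ => (((n : ℤ) : ℝ) : EReal)) atTop (𝓝 ⊤) :=
    tendsto_nhds_top_iff_real.mpr fun x => by
      filter_upwards [tendsto_natCast_atTop_atTop.eventually_gt_atTop x] with n hn
      exact_mod_cast hn
  rw [accPt_iff_frequently]
  exact this.frequently <| .of_forall fun n =>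
    ⟨coe_ne_top _, mem_image_of_mem _ (mem_range_self _)⟩

theorem accPt_bot_image_range_intCast :
    AccPt (⊥ : EReal) (𝓟 (Real.toEReal '' range ((↑) : ℤ → ℝ))) := by
  have : Tendsto (fun n : ℕ => (((-n : ℤ) : ℝ) : EReal)) atTop (𝓝 ⊥) :=
    tendsto_nhds_bot_iff_real.mpr fun x => by
      filter_upwards [tendsto_natCast_atTop_atTop.eventually_gt_atTop (-x)] with n hn
      exact EReal.coe_lt_coe_iff.mpr (by push_cast; linarith)
  rw [accPt_iff_frequently]
  exact this.frequently <| .of_forall fun n =>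
    ⟨coe_ne_bot _, mem_image_of_mem _ (mem_range_self _)⟩

theorem setOf_accPt_image_range_intCast :
    {x : EReal | AccPt x (𝓟 (Real.toEReal '' range ((↑) : ℤ → ℝ)))} = {⊥, ⊤} := by
  ext x
  induction x using EReal.rec with
  | bot => simpa using accPt_bot_image_range_intCast
  | top => simpa using accPt_top_image_range_intCast
  | coe t =>
    simp only [mem_ofPred_eq, mem_insert_iff, mem_singleton_iff, coe_ne_bot, coe_ne_top,
      or_self, iff_false]
    rw [← isOpenEmbedding_coe.accPt_comap_iff, comap_principal,
      isOpenEmbedding_coe.injective.preimage_image]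
    exact Real.not_accPt_range_intCast t

end EReal

namespace IntervalHomeo

noncomputable def chart : EReal ≃o unitInterval :=
  EReal.expOrderIso.trans ENNReal.orderIsoUnitIntervalBirational

theorem chart_coe_mem_openI (t : ℝ) : chart t ∈ openI := by
  have h₀ : chart ⊥ < chart t := chart.strictMono (EReal.bot_lt_coe t)
  have h₁ : chart t < chart ⊤ := chart.strictMono (EReal.coe_lt_top t)
  rw [chart.map_bot] at h₀
  rw [chart.map_top] at h₁
  exact ⟨h₀, h₁⟩

theorem setOf_accPt_chart_image_intCast :
    {p | AccPt p (𝓟 (chart '' (Real.toEReal '' range ((↑) : ℤ → ℝ))))} = {0, 1} := by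
  have := chart.toHomeomorph.setOf_accPt_image (Real.toEReal '' range ((↑) : ℤ → ℝ))
  rw [OrderIso.coe_toHomeomorph] at this
  rw [this, EReal.setOf_accPt_image_range_intCast, image_pair, chart.map_bot, chart.map_top]
  rfl

theorem dense_chart_image {S : Set ℝ} (hS : Dense S) : Dense (chart '' (Real.toEReal '' S)) :=
  chart.toHomeomorph.surjective.denseRange.dense_image chart.toHomeomorph.continuous
    (EReal.denseRange_coe.dense_image continuous_coe_real_ereal hS)

def extendEReal (h : ℝ ≃o ℝ) : EReal ≃o EReal := h.withTopCongr.withBotCongr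

theorem extendEReal_coe (h : ℝ ≃o ℝ) (t : ℝ) : extendEReal h t = h t := rfl

theorem extendEReal_one : extendEReal 1 = 1 := by
  ext x; induction x using EReal.rec <;> rfl

theorem extendEReal_mul (h₁ h₂ : ℝ ≃o ℝ) :
    extendEReal (h₁ * h₂) = extendEReal h₁ * extendEReal h₂ := by
  ext x; induction x using EReal.rec <;> rfl

noncomputable def liftToUnitInterval : (ℝ ≃o ℝ) →* IntervalHomeo where
  toFun h := chart.symm.trans ((extendEReal h).trans chart)
  map_one' := by ext p; simp [extendEReal_one]
  map_mul' h₁ h₂ := by ext p; simp [extendEReal_mul]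

theorem liftToUnitInterval_chart (h : ℝ ≃o ℝ) (t : ℝ) :
    liftToUnitInterval h (chart t) = chart (h t) := by
  simp [liftToUnitInterval, extendEReal_coe]

theorem orbit_map_liftToUnitInterval (H : Subgroup (ℝ ≃o ℝ)) (t : ℝ) :
    orbit (H.map liftToUnitInterval) (chart t) =
      chart '' (Real.toEReal '' MulAction.orbit H t) := by
  ext p
  constructor
  · rintro ⟨_, ⟨h, hh, rfl⟩, rfl⟩
    exact ⟨h t, ⟨h t, ⟨⟨h, hh⟩, rfl⟩, rfl⟩, (liftToUnitInterval_chart h t).symm⟩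
  · rintro ⟨_, ⟨_, ⟨⟨h, hh⟩, rfl⟩, rfl⟩, rfl⟩
    exact ⟨liftToUnitInterval h, ⟨h, hh, rfl⟩, liftToUnitInterval_chart h t⟩

noncomputable def cell (n : ℤ) : ℝ ↪o ℝ :=
  OrderEmbedding.ofStrictMono (fun s => n + sigmoid s) fun _ _ h => by
    simpa using sigmoid_lt h

theorem cell_apply (n : ℤ) (s : ℝ) : cell n s = n + sigmoid s := rfl

theorem range_cell (n : ℤ) : range (cell n) = Ioo (n : ℝ) (n + 1) := by
  rw [show ⇑(cell n) = (fun x => (n : ℝ) + x) ∘ sigmoid from rfl, range_comp, range_sigmoid,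
    image_const_add_Ioo, add_zero]

theorem cell_add_intCast (n k : ℤ) (s : ℝ) : cell n s + k = cell (n + k) s := by
  simp only [cell_apply, Int.cast_add]; ring

theorem floor_eq_of_mem_range_cell {n : ℤ} {x : ℝ} (hx : x ∈ range (cell n)) : ⌊x⌋ = n := by
  rw [range_cell] at hx
  exact Int.floor_eq_iff.mpr ⟨hx.1.le, hx.2⟩

theorem cell_notMem_range_cell {m n : ℤ} (h : m ≠ n) (s : ℝ) : cell m s ∉ range (cell n) :=
  fun hs => h ((floor_eq_of_mem_range_cell (mem_range_self s)).symm.trans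
    (floor_eq_of_mem_range_cell hs))

theorem intCast_notMem_range_cell (k n : ℤ) : (k : ℝ) ∉ range (cell n) := by
  rw [range_cell]
  rintro ⟨h₁, h₂⟩
  have : n < k := by exact_mod_cast h₁
  have : k < n + 1 := by exact_mod_cast h₂
  omega

theorem ordConnected_range_cell (n : ℤ) : (range (cell n)).OrdConnected := by
  rw [range_cell]; exact ordConnected_Ioo

noncomputable def cellShift (n : ℤ) (c : ℝ) : ℝ ≃o ℝ :=
  OrderIso.extendAlong (cell n) (ordConnected_range_cell n) (OrderIso.addRight c)

theorem cellShift_cell (n : ℤ) (c s : ℝ) : cellShift n c (cell n s) = cell n (s + c) :=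
  OrderIso.extendAlong_apply_self _ _ _ s

theorem cellShift_of_notMem {n : ℤ} {x : ℝ} (c : ℝ) (hx : x ∉ range (cell n)) :
    cellShift n c x = x :=
  OrderIso.extendAlong_apply_of_notMem _ _ _ hx

noncomputable def bumps : ℝ ≃o ℝ := cellShift 0 1 * cellShift 1 √2

theorem bumps_cell_zero (s : ℝ) : bumps (cell 0 s) = cell 0 (s + 1) := by
  change cellShift 0 1 (cellShift 1 √2 (cell 0 s)) = _
  rw [cellShift_of_notMem _ (cell_notMem_range_cell (by decide) s), cellShift_cell]

theorem bumps_cell_one (s : ℝ) : bumps (cell 1 s) = cell 1 (s + √2) := by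
  change cellShift 0 1 (cellShift 1 √2 (cell 1 s)) = _
  rw [cellShift_cell, cellShift_of_notMem _ (cell_notMem_range_cell (by decide) _)]

theorem bumps_intCast (k : ℤ) : bumps k = k := by
  change cellShift 0 1 (cellShift 1 √2 k) = k
  rw [cellShift_of_notMem _ (intCast_notMem_range_cell k 1),
    cellShift_of_notMem _ (intCast_notMem_range_cell k 0)]

noncomputable def modelGroup : Subgroup (ℝ ≃o ℝ) :=
  Subgroup.closure {OrderIso.addRight 1, bumps}

theorem addRight_one_mem_modelGroup : OrderIso.addRight 1 ∈ modelGroup :=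
  Subgroup.subset_closure (mem_insert _ _)

theorem bumps_mem_modelGroup : bumps ∈ modelGroup :=
  Subgroup.subset_closure (mem_insert_of_mem _ rfl)

theorem add_intCast_mem_orbit_iff {H : Subgroup (ℝ ≃o ℝ)} (hH : OrderIso.addRight 1 ∈ H)
    {t y : ℝ} (k : ℤ) : y + k ∈ MulAction.orbit H t ↔ y ∈ MulAction.orbit H t := by
  have step (z : ℝ) : z + 1 ∈ MulAction.orbit H t ↔ z ∈ MulAction.orbit H t :=
    OrderIso.apply_mem_orbit_iff hH
  induction k using Int.induction_on with
  | zero => simp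
  | succ k ih =>
    have e : y + ((k + 1 : ℤ) : ℝ) = y + (k : ℤ) + 1 := by push_cast; ring
    exact e ▸ (step _).trans ih
  | pred k ih =>
    have e : y + ((-k - 1 : ℤ) : ℝ) + 1 = y + (-k : ℤ) := by push_cast; ring
    exact (step _).symm.trans (e ▸ ih)

theorem modelGroup_le_stabilizer_range_intCast :
    modelGroup ≤ MulAction.stabilizer (ℝ ≃o ℝ) (range ((↑) : ℤ → ℝ)) := by
  rw [modelGroup, Subgroup.closure_le, insert_subset_iff, singleton_subset_iff]
  refine ⟨MulAction.mem_stabilizer_set.mpr fun b => ?_,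
    MulAction.mem_stabilizer_set.mpr fun b => ?_⟩
  · change b + 1 ∈ range _ ↔ b ∈ range _
    constructor <;> rintro ⟨k, hk⟩
    · exact ⟨k - 1, by push_cast; linarith⟩
    · exact ⟨k + 1, by push_cast; linarith⟩
  · change bumps b ∈ range _ ↔ b ∈ range _
    constructor <;> rintro ⟨k, hk⟩
    · exact ⟨k, bumps.injective ((bumps_intCast k).trans hk)⟩
    · exact ⟨k, (bumps_intCast k).symm.trans (congrArg bumps hk)⟩

theorem orbit_zero : MulAction.orbit modelGroup (0 : ℝ) = range ((↑) : ℤ → ℝ) := by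
  ext y
  constructor
  · rintro ⟨⟨h, hh⟩, rfl⟩
    exact (MulAction.mem_stabilizer_set.mp (modelGroup_le_stabilizer_range_intCast hh) 0).mpr
      ⟨0, Int.cast_zero⟩
  · rintro ⟨k, rfl⟩
    simpa using (add_intCast_mem_orbit_iff addRight_one_mem_modelGroup k).mpr
      (MulAction.mem_orbit_self (0 : ℝ))

theorem dense_of_forall_cell_mem {D O : Set ℝ} (hD : Dense D)
    (h : ∀ k s, s ∈ D → cell k s ∈ O) : Dense O := by
  intro x
  have hfract : Int.fract x ∈ closure (sigmoid '' D) := by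
    rw [← closure_image_closure continuous_sigmoid, hD.closure_eq, image_univ, range_sigmoid,
      closure_Ioo zero_ne_one]
    exact ⟨Int.fract_nonneg x, (Int.fract_lt_one x).le⟩
  have hsub : (fun y => (⌊x⌋ : ℝ) + y) '' (sigmoid '' D) ⊆ O := by
    rintro _ ⟨_, ⟨s, hs, rfl⟩, rfl⟩
    exact h _ s hs
  refine closure_mono hsub
    (image_closure_subset_closure_image (continuous_const.add continuous_id) ⟨_, hfract, ?_⟩)
  simp

theorem dense_orbit_cell_zero : Dense (MulAction.orbit modelGroup (cell 0 0)) := by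
  set O := MulAction.orbit modelGroup (cell 0 0)
  have cell_mem_iff (k : ℤ) (s : ℝ) : cell k s ∈ O ↔ cell 0 s ∈ O := by
    have := add_intCast_mem_orbit_iff addRight_one_mem_modelGroup (t := cell 0 0)
      (y := cell 0 s) k
    rwa [cell_add_intCast, zero_add] at this
  have hstab : AddSubgroup.closure {√2, 1} ≤ AddAction.stabilizer ℝ {s | cell 0 s ∈ O} := by
    rw [AddSubgroup.closure_le, insert_subset_iff, singleton_subset_iff]
    refine ⟨AddAction.mem_stabilizer_set.mpr fun s => ?_,
      AddAction.mem_stabilizer_set.mpr fun s => ?_⟩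
    · change cell 0 (√2 + s) ∈ O ↔ cell 0 s ∈ O
      rw [← cell_mem_iff 1, ← cell_mem_iff 1 s, add_comm, ← bumps_cell_one,
        OrderIso.apply_mem_orbit_iff bumps_mem_modelGroup]
    · change cell 0 (1 + s) ∈ O ↔ cell 0 s ∈ O
      rw [add_comm, ← bumps_cell_zero, OrderIso.apply_mem_orbit_iff bumps_mem_modelGroup]
  have hdense : Dense (AddSubgroup.closure {√2, 1} : Set ℝ) :=
    dense_addSubgroupClosure_pair_iff.mpr (by simpa using irrational_sqrt_two)
  refine dense_of_forall_cell_mem hdense fun k s hs => (cell_mem_iff k s).mpr ?_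
  simpa using (AddAction.mem_stabilizer_set.mp (hstab hs) 0).mpr (MulAction.mem_orbit_self _)

end IntervalHomeo

open IntervalHomeo in
/-- There are orientation-preserving homeomorphisms `f`, `g` of `[0,1]`
and points `z, x ∈ (0,1)` such that, for the group `G` generated by `f` and `g`, the
accumulation set of the orbit of `z` is exactly `{0,1}` and the orbit of `x` is dense in
`[0,1]`. -/
theorem stmt10 : ∃ f g : IntervalHomeo, ∃ z x : unitInterval,
    z ∈ openI ∧ x ∈ openI ∧
    ∀ G : Subgroup IntervalHomeo, G = Subgroup.closure {f, g} →
      {p | AccPt p (𝓟 (orbit G z))} = {0, 1} ∧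
      Dense (orbit G x) := by
  refine ⟨liftToUnitInterval (OrderIso.addRight 1), liftToUnitInterval bumps, chart (0 : ℝ),
    chart (cell 0 0 : ℝ), chart_coe_mem_openI _, chart_coe_mem_openI _, ?_⟩
  rintro G rfl
  have hG : Subgroup.closure {liftToUnitInterval (OrderIso.addRight 1), liftToUnitInterval bumps}
      = modelGroup.map liftToUnitInterval := by
    rw [modelGroup, MonoidHom.map_closure, image_pair]
  rw [hG, orbit_map_liftToUnitInterval, orbit_map_liftToUnitInterval, orbit_zero]
  exact ⟨setOf_accPt_chart_image_intCast, dense_chart_image dense_orbit_cell_zero⟩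
end
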